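/- arXiv:1709.04701 — 6 statements merged into one kernel-verified Lean document; each statement's English description precedes it below -/
import Mathlib

section
/- (Theorem 3, correction part) Let n > ρ ≥ 1 and let q be a prime power. Let C ⊆ F_q^n be a linear code in which every nonzero codeword has Hamming weight at least ρ + 1. Then the set C_{G_1} of all n×n matrices A over F_q such that every column of A belongs to C and each of the first n−ρ rows of A belongs to C is ρ-node-erasure-correcting. -/
/-- A set `C` of `n × n` matrices over an alphabet is `ρ`-node-erasure-correcting if for
every set `J` of `ρ` node indices, any two matrices in `C` agreeing on all entries whose
row and column indices both lie outside `J` are equal. -/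
def NodeErasureCorrecting {n : ℕ} {α : Type*} (ρ : ℕ)
    (C : Set (Fin n → Fin n → α)) : Prop :=
  ∀ J : Finset (Fin n), J.card = ρ →
    ∀ A ∈ C, ∀ B ∈ C,
      (∀ i j : Fin n, i ∉ J → j ∉ J → A i j = B i j) → A = B

/-- Theorem 3 (correction part): let `C ⊆ F_q^n` be a linear code over a finite field
`F_q` (`q` a prime power) in which every nonzero codeword has Hamming weight at least
`ρ + 1`.  Then the set `C_{G_1}` of `n × n` matrices all of whose columns lie in `C` and
whose first `n - ρ` rows lie in `C` is `ρ`-node-erasure-correcting. -/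
theorem CG1_nodeErasureCorrecting {n ρ : ℕ} (hρ : 1 ≤ ρ) (hn : ρ < n)
    {F : Type*} [Field F] [Fintype F] [DecidableEq F]
    (C : Submodule F (Fin n → F))
    (hwt : ∀ c ∈ C, c ≠ 0 →
      ρ + 1 ≤ (Finset.univ.filter (fun i : Fin n => c i ≠ 0)).card) :
    NodeErasureCorrecting ρ
      {A : Fin n → Fin n → F |
        (∀ j : Fin n, (fun i => A i j) ∈ C) ∧
        (∀ i : Fin n, (i : ℕ) < n - ρ → (fun j => A i j) ∈ C)} := by
  intro J hJ A hA B hB hagree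
  set D : Fin n → Fin n → F := fun i j => A i j - B i j with hD
  have hzero : ∀ c ∈ C,
      (Finset.univ.filter (fun i : Fin n => c i ≠ 0)).card ≤ ρ → c = 0 := by
    intro c hc hcard
    by_contra h
    have := hwt c hc h
    omega
  have hcol : ∀ j, (fun i => D i j) ∈ C := fun j => C.sub_mem (hA.1 j) (hB.1 j)
  -- step 1: entries in columns outside J vanish
  have h1 : ∀ i j, j ∉ J → D i j = 0 := by
    intro i j hj
    have hsub : (Finset.univ.filter (fun i : Fin n => D i j ≠ 0)) ⊆ J := by
      intro k hk
      simp only [Finset.mem_filter] at hk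
      by_contra hkJ
      exact hk.2 (sub_eq_zero.mpr (hagree k j hkJ hj))
    have := hzero _ (hcol j) (le_trans (Finset.card_le_card hsub) hJ.le)
    exact congrFun this i
  -- step 2: the first n - ρ rows vanish
  have h2 : ∀ i : Fin n, (i : ℕ) < n - ρ → ∀ j, D i j = 0 := by
    intro i hi j
    have hrow : (fun j => D i j) ∈ C := C.sub_mem (hA.2 i hi) (hB.2 i hi)
    have hsub : (Finset.univ.filter (fun j : Fin n => D i j ≠ 0)) ⊆ J := by
      intro k hk
      simp only [Finset.mem_filter] at hk
      by_contra hkJ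
      exact hk.2 (h1 i k hkJ)
    have := hzero _ hrow (le_trans (Finset.card_le_card hsub) hJ.le)
    exact congrFun this j
  -- step 3: all entries vanish
  have hcard : (Finset.univ.filter (fun i : Fin n => n - ρ ≤ (i : ℕ))).card = ρ := by
    have : (Finset.univ.filter (fun i : Fin n => n - ρ ≤ (i : ℕ))) =
        (Finset.univ.filter (fun i : Fin n => (i : ℕ) < n - ρ))ᶜ := by
      ext i
      simp [not_lt]
    rw [this, Finset.card_compl]
    have heq : (Finset.univ.filter (fun i : Fin n => (i : ℕ) < n - ρ)) =
        Finset.map (Fin.castLEEmb (Nat.sub_le n ρ)) Finset.univ := by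
      ext i
      simp only [Finset.mem_filter, Finset.mem_map, Finset.mem_univ, true_and,
        Fin.castLEEmb_apply]
      constructor
      · intro h
        exact ⟨⟨i, h⟩, Fin.ext rfl⟩
      · rintro ⟨a, rfl⟩
        exact a.2
    rw [heq, Finset.card_map, Finset.card_univ, Fintype.card_fin, Fintype.card_fin]
    omega
  have h3 : ∀ i j, D i j = 0 := by
    intro i j
    have hsub : (Finset.univ.filter (fun i : Fin n => D i j ≠ 0)) ⊆
        Finset.univ.filter (fun i : Fin n => n - ρ ≤ (i : ℕ)) := by
      intro k hk
      simp only [Finset.mem_filter] at hk ⊢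
      refine ⟨Finset.mem_univ k, ?_⟩
      by_contra h
      exact hk.2 (h2 k (by omega) j)
    have := hzero _ (hcol j) (le_trans (Finset.card_le_card hsub) hcard.le)
    exact congrFun this i
  funext i j
  have := h3 i j
  simp only [hD] at this
  exact sub_eq_zero.mp this
end

section
/- (Theorem 3, dimension part) Let n > ρ ≥ 1 and let q be a prime power. Let C ⊆ F_q^n be an [n, n−ρ, ρ+1] MDS code, i.e., a linear code of dimension n−ρ in which every nonzero codeword has Hamming weight at least ρ + 1. Then the set C_{G_1} of all n×n matrices A over F_q such that every column of A belongs to C and each of the first n−ρ rows of A belongs to C is an F_q-linear subspace of the space of n×n matrices of dimension exactly (n−ρ)². -/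
/-- Theorem 3 (dimension part): let `C ⊆ F_q^n` be an `[n, n-ρ, ρ+1]` MDS code over a
finite field `F_q`, i.e. a linear code of dimension `n - ρ` in which every nonzero
codeword has Hamming weight at least `ρ + 1`.  Then the set `C_{G_1}` of `n × n`
matrices all of whose columns lie in `C` and whose first `n - ρ` rows lie in `C` is an
`F_q`-linear subspace of dimension exactly `(n - ρ)²`. -/
theorem CG1_dimension {n ρ : ℕ} (hρ : 1 ≤ ρ) (hn : ρ < n)
    {F : Type*} [Field F] [Fintype F] [DecidableEq F]
    (C : Submodule F (Fin n → F))
    (hdim : Module.finrank F C = n - ρ)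
    (hwt : ∀ c ∈ C, c ≠ 0 →
      ρ + 1 ≤ (Finset.univ.filter (fun i : Fin n => c i ≠ 0)).card) :
    ∃ V : Submodule F (Fin n → Fin n → F),
      (V : Set (Fin n → Fin n → F)) =
        {A : Fin n → Fin n → F |
          (∀ j : Fin n, (fun i => A i j) ∈ C) ∧
          (∀ i : Fin n, (i : ℕ) < n - ρ → (fun j => A i j) ∈ C)} ∧
      Module.finrank F V = (n - ρ) ^ 2 := by
  have hkn : n - ρ ≤ n := Nat.sub_le _ _
  -- a codeword vanishing on the first n-ρ coordinates is zero
  have hzero : ∀ c ∈ C, (∀ i : Fin n, (i : ℕ) < n - ρ → c i = 0) → c = 0 := by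
    intro c hc hv
    by_contra h
    have h1 := hwt c hc h
    have h2 : (Finset.univ.filter (fun i : Fin n => c i ≠ 0)) ⊆
        (Finset.univ.filter (fun i : Fin n => n - ρ ≤ (i : ℕ))) := by
      intro i hi
      simp only [Finset.mem_filter, Finset.mem_univ, true_and] at hi ⊢
      by_contra hlt
      exact hi (hv i (by omega))
    have h3 : (Finset.univ.filter (fun i : Fin n => n - ρ ≤ (i : ℕ))).card ≤ n - (n - ρ) := by
      rw [← Nat.card_Ico (n - ρ) n]
      refine Finset.card_le_card_of_injOn (fun i => (i : ℕ)) ?_ ?_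
      · intro i hi; simp at hi ⊢; exact hi
      · intro a _ b _ h; exact Fin.ext h
    have h4 := Finset.card_le_card h2
    omega
  -- the projection to the first n-ρ coordinates
  set π : (Fin n → F) →ₗ[F] (Fin (n - ρ) → F) := LinearMap.funLeft F F (Fin.castLE hkn) with hπ
  set p : C →ₗ[F] (Fin (n - ρ) → F) := π.comp C.subtype with hp
  have hpinj : Function.Injective p := by
    rw [← LinearMap.ker_eq_bot, LinearMap.ker_eq_bot']
    intro x hx
    have : (x : Fin n → F) = 0 := by
      refine hzero x x.2 fun i hi => ?_
      have := congrFun hx ⟨(i : ℕ), hi⟩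
      simpa [hp, hπ, LinearMap.funLeft, Fin.castLE] using this
    exact Subtype.ext this
  have hdim' : Module.finrank F C = Module.finrank F (Fin (n - ρ) → F) := by
    rw [hdim, Module.finrank_pi]; simp
  set e : C ≃ₗ[F] (Fin (n - ρ) → F) := p.linearEquivOfInjective hpinj hdim' with he
  have hE : ∀ (x : Fin (n - ρ) → F) (i : Fin (n - ρ)),
      ((e.symm x : C) : Fin n → F) (Fin.castLE hkn i) = x i := by
    intro x i
    have h1 : p (e.symm x) = x := by
      have := e.apply_symm_apply x
      rwa [he, LinearMap.linearEquivOfInjective_apply] at this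
    exact congrFun h1 i
  -- the subspace V
  set S : Set (Fin n → Fin n → F) := {A : Fin n → Fin n → F |
          (∀ j : Fin n, (fun i => A i j) ∈ C) ∧
          (∀ i : Fin n, (i : ℕ) < n - ρ → (fun j => A i j) ∈ C)} with hS
  let V : Submodule F (Fin n → Fin n → F) :=
    { carrier := S
      add_mem' := fun {A} {B} hA hB => ⟨fun j => C.add_mem (hA.1 j) (hB.1 j),
        fun i hi => C.add_mem (hA.2 i hi) (hB.2 i hi)⟩
      zero_mem' := ⟨fun j => C.zero_mem, fun i _ => C.zero_mem⟩
      smul_mem' := fun c {A} hA => ⟨fun j => C.smul_mem c (hA.1 j),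
        fun i hi => C.smul_mem c (hA.2 i hi)⟩ }
  refine ⟨V, rfl, ?_⟩
  -- the linear equivalence with the space of (n-ρ)×(n-ρ) blocks
  set f : V →ₗ[F] (Fin (n - ρ) → Fin (n - ρ) → F) :=
    { toFun := fun A i j => (A : Fin n → Fin n → F) (Fin.castLE hkn i) (Fin.castLE hkn j),
      map_add' := fun _ _ => rfl,
      map_smul' := fun _ _ => rfl } with hf
  have hfinj : Function.Injective f := by
    rw [← LinearMap.ker_eq_bot, LinearMap.ker_eq_bot']
    intro A hA
    have hrow : ∀ i : Fin n, (i : ℕ) < n - ρ → (fun j => (A : Fin n → Fin n → F) i j) = 0 := by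
      intro i hi
      refine hzero _ (A.2.2 i hi) fun j hj => ?_
      have h1 := congrFun (congrFun hA ⟨(i : ℕ), hi⟩) ⟨(j : ℕ), hj⟩
      simpa [hf, Fin.castLE] using h1
    have hcol : ∀ j : Fin n, (fun i => (A : Fin n → Fin n → F) i j) = 0 := by
      intro j
      refine hzero _ (A.2.1 j) fun i hi => ?_
      exact congrFun (hrow i hi) j
    refine Subtype.ext (funext fun i => funext fun j => ?_)
    exact congrFun (hcol j) i
  have hfsurj : Function.Surjective f := by
    intro B
    set r : Fin (n - ρ) → Fin n → F := fun i' => ((e.symm (B i') : C) : Fin n → F) with hr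
    set A : Fin n → Fin n → F :=
      fun i j => ((e.symm (fun i' => r i' j) : C) : Fin n → F) i with hA
    have hAcol : ∀ j : Fin n, (fun i => A i j) ∈ C := fun j => (e.symm (fun i' => r i' j)).2
    have hArow : ∀ i : Fin n, (i : ℕ) < n - ρ → (fun j => A i j) ∈ C := by
      intro i hi
      have : (fun j => A i j) = r ⟨(i : ℕ), hi⟩ := by
        funext j
        have h1 := hE (fun i' => r i' j) ⟨(i : ℕ), hi⟩
        have h2 : Fin.castLE hkn ⟨(i : ℕ), hi⟩ = i := Fin.ext rfl
        rw [h2] at h1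
        exact h1
      rw [this]
      exact (e.symm (B ⟨(i : ℕ), hi⟩)).2
    refine ⟨⟨A, hAcol, hArow⟩, ?_⟩
    funext i' j'
    have h1 := hE (fun i'' => r i'' (Fin.castLE hkn j')) i'
    show A (Fin.castLE hkn i') (Fin.castLE hkn j') = B i' j'
    exact h1.trans (hE (B i') j')
  have := LinearEquiv.finrank_eq (LinearEquiv.ofBijective f ⟨hfinj, hfsurj⟩)
  rw [this]
  simp [Module.finrank_pi_fintype, Module.finrank_pi, sq]
end

section
/- (Theorem 5) Let n ≥ 1 and ρ < n/2, and let C be a linear space of n×n matrices over F_2 such that every nonzero matrix of C has cover-weight at least 2ρ + 1. Then the code over graphs C_{G_2} = {G : A_G ∈ C}, i.e., the set of matrices C itself, is ρ-node-erasure-correcting: for every subset J ⊆ [n] with |J| = ρ, any two matrices of C that agree on all entries (i,j) with i ∉ J and j ∉ J are equal. -/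
/-- `(S, T)` is a cover of the `n × n` matrix `Γ` if every nonzero entry `γ_{i,j}`
has `i ∈ S` or `j ∈ T`. -/
def IsCover {n : ℕ} {F : Type*} [Zero F] (Γ : Fin n → Fin n → F)
    (S T : Finset (Fin n)) : Prop :=
  ∀ i j : Fin n, Γ i j ≠ 0 → i ∈ S ∨ j ∈ T

/-- Theorem 5: if `ρ < n/2` and `C` is a binary linear space of `n × n` matrices in
which every nonzero matrix has cover-weight at least `2ρ + 1`, then the code over
graphs `C_{G_2} = {G : A_G ∈ C}` is `ρ`-node-erasure-correcting. -/
theorem CG2_nodeErasureCorrecting {n ρ : ℕ} (hn : 2 * ρ < n)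
    (C : Submodule (ZMod 2) (Fin n → Fin n → ZMod 2))
    (hcw : ∀ Γ ∈ C, Γ ≠ 0 →
      ∀ S T : Finset (Fin n), IsCover Γ S T → 2 * ρ + 1 ≤ S.card + T.card) :
    NodeErasureCorrecting ρ (C : Set (Fin n → Fin n → ZMod 2)) := by
  intro J hJ A hA B hB hagree
  by_contra hne
  have hmem : A - B ∈ C := sub_mem hA hB
  have hΓ : A - B ≠ 0 := sub_ne_zero_of_ne hne
  have hcover : IsCover (A - B) J J := by
    intro i j hij
    by_contra h
    push_neg at h
    exact hij (by simp [sub_eq_zero, hagree i j h.1 h.2])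
  have := hcw (A - B) hmem hΓ J J hcover
  omega
end

section
/- (Singleton bound for crisscross array codes) Let F be a field, n ≥ 1, and 1 ≤ d ≤ n. If C is a linear space of n×n matrices over F in which every nonzero matrix has cover-weight at least d, then dim C ≤ n(n − d + 1). -/
/-- Singleton bound for crisscross array codes: if `C` is a linear space of `n × n`
matrices over a field `F` in which every nonzero matrix has cover-weight at least `d`
(`1 ≤ d ≤ n`), then `dim C ≤ n (n - d + 1)`. -/
theorem singleton_bound_crisscross {n d : ℕ} (hn : 1 ≤ n) (hd1 : 1 ≤ d) (hdn : d ≤ n)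
    {F : Type*} [Field F]
    (C : Submodule F (Fin n → Fin n → F))
    (hcw : ∀ Γ ∈ C, Γ ≠ 0 →
      ∀ S T : Finset (Fin n), IsCover Γ S T → d ≤ S.card + T.card) :
    Module.finrank F C ≤ n * (n - d + 1) := by
  set S : Finset (Fin n) := Finset.univ.filter (fun i => i.val < d - 1) with hS
  have hScard : S.card = d - 1 := by
    have hb : d - 1 < n := by omega
    have : S = Finset.Iio (⟨d - 1, hb⟩ : Fin n) := by
      ext i; simp [hS, Fin.lt_def]
    rw [this, Fin.card_Iio]
  let L : C →ₗ[F] ({i : Fin n // d - 1 ≤ i.val} → Fin n → F) :=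
    (LinearMap.funLeft F (Fin n → F) Subtype.val).comp C.subtype
  have hinj : Function.Injective L := by
    rw [← LinearMap.ker_eq_bot, LinearMap.ker_eq_bot']
    intro ⟨Γ, hΓ⟩ hLΓ
    have hzero : ∀ i : Fin n, d - 1 ≤ i.val → Γ i = 0 := fun i hi =>
      congrFun hLΓ ⟨i, hi⟩
    ext1
    by_contra hne
    have hcov : IsCover Γ S ∅ := by
      intro i j hij
      left
      simp only [hS, Finset.mem_filter, Finset.mem_univ, true_and]
      by_contra h
      push_neg at h
      exact hij (congrFun (hzero i h) j)
    have := hcw Γ hΓ hne S ∅ hcov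
    rw [hScard, Finset.card_empty] at this
    omega
  calc Module.finrank F C ≤ Module.finrank F ({i : Fin n // d - 1 ≤ i.val} → Fin n → F) :=
        LinearMap.finrank_le_finrank_of_injective hinj
    _ = Fintype.card {i : Fin n // d - 1 ≤ i.val} * n := by
        simp [Module.finrank_pi_fintype, Module.finrank_pi]
    _ ≤ n * (n - d + 1) := by
        have : Fintype.card {i : Fin n // d - 1 ≤ i.val} = n - (d - 1) := by
          rw [Fintype.card_subtype]
          have : Finset.filter (fun i : Fin n => d - 1 ≤ i.val) Finset.univ = Sᶜ := by
            ext i; simp [hS]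
          rw [this, Finset.card_compl, hScard, Fintype.card_fin]
        rw [this]
        have : n - (d - 1) = n - d + 1 := by omega
        rw [this, Nat.mul_comm]
end

section
/- (Correctness of Construction 3) Let n ≥ 5 be prime. Then the code C_{U_1} is an undirected double-node-erasure-correcting code: for any two distinct indices i, j ∈ [n], any two labelings in C_{U_1} that agree on every unordered pair ⟨k,ℓ⟩ with k ∉ {i,j} and ℓ ∉ {i,j} are equal. -/
open Finset

/-- The code `C_{U_1}` (Construction 3).  A labeling of the complete undirected graph with
self-loops on `n` nodes is encoded as a symmetric function `L : Fin n → Fin n → ZMod 2`.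
The constraints are: for `h ∈ [n-2]`, the sum of `L` over `S_h = {⟨h,ℓ⟩ : ℓ ∈ [n-1]}` is `0`;
the sum over `S_{n-2} = {⟨ℓ,ℓ⟩ : ℓ ∈ [n-1]}` is `0`; and for `m ∈ [n]`, the sum over
`D_m = {⟨k,ℓ⟩ : k,ℓ ∈ [n] \ {n-2}, ⟨k+ℓ⟩_n = m} ∪ {⟨n-1,n-2⟩}` is `0`, each unordered
pair counted once (here represented by ordered pairs `(k,ℓ)` with `k ≤ ℓ`). -/
def CU1 (n : ℕ) (hn : 5 ≤ n) : Set (Fin n → Fin n → ZMod 2) :=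
  {L | (∀ k ℓ : Fin n, L k ℓ = L ℓ k) ∧
    (∀ h : Fin n, (h : ℕ) < n - 2 →
      ∑ ℓ ∈ univ.filter (fun ℓ : Fin n => (ℓ : ℕ) < n - 1), L h ℓ = 0) ∧
    (∑ ℓ ∈ univ.filter (fun ℓ : Fin n => (ℓ : ℕ) < n - 1), L ℓ ℓ = 0) ∧
    (∀ m : ℕ, m < n →
      (∑ p ∈ univ.filter (fun p : Fin n × Fin n =>
          (p.1 : ℕ) ≤ (p.2 : ℕ) ∧ (p.1 : ℕ) ≠ n - 2 ∧ (p.2 : ℕ) ≠ n - 2 ∧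
            ((p.1 : ℕ) + (p.2 : ℕ)) % n = m),
          L p.1 p.2) + L ⟨n - 1, by omega⟩ ⟨n - 2, by omega⟩ = 0)}

section
variable {n : ℕ}

lemma mod_char' {n a m : ℕ} (hn : 0 < n) (ha : a < 2*n) (hm : m < n) :
    a % n = m ↔ a = m ∨ a = m + n := by
  rcases Nat.lt_or_ge a n with h | h
  · rw [Nat.mod_eq_of_lt h]; omega
  · rw [Nat.mod_eq_sub_mod h, Nat.mod_eq_of_lt (by omega)]; omega

lemma mod_partner {n x y m : ℕ} (hn : 0 < n) (hx : x < n) (hy : y < n) (hm : m < n) :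
    (x + y) % n = m ↔ y = (m + n - x) % n := by
  have e1 := mod_char' hn (show x + y < 2*n by omega) hm
  have e2 : (x ≤ m ∧ (m + n - x) % n = m - x) ∨ (m < x ∧ (m + n - x) % n = m + n - x) := by
    rcases Nat.lt_or_ge (m + n - x) n with h | h
    · right; exact ⟨by omega, Nat.mod_eq_of_lt h⟩
    · refine Or.inl ⟨by omega, ?_⟩
      rw [Nat.mod_eq_sub_mod h, Nat.mod_eq_of_lt (by omega)]
      omega
  rcases e2 with ⟨hr, e2⟩ | ⟨hr, e2⟩ <;> rw [e1, e2] <;> omega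

lemma sum_support2 (i j : Fin n) (hij : i ≠ j) (P : Fin n → Prop) [DecidablePred P]
    (F : Fin n → ZMod 2) (h : ∀ x, x ≠ i → x ≠ j → F x = 0) :
    ∑ x ∈ univ.filter P, F x = (if P i then F i else 0) + (if P j then F j else 0) := by
  rw [Finset.sum_filter]
  rw [← Finset.sum_subset (Finset.subset_univ ({i, j} : Finset (Fin n)))]
  · rw [Finset.sum_pair hij]
  · intro x _ hx
    simp only [Finset.mem_insert, Finset.mem_singleton, not_or] at hx
    rw [h x hx.1 hx.2]
    simp

def opair (a b : Fin n) : Fin n × Fin n := if (a : ℕ) ≤ (b : ℕ) then (a, b) else (b, a)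

lemma opair_comm (a b : Fin n) : opair a b = opair b a := by
  unfold opair
  split_ifs with h1 h2 h2
  · have : a = b := Fin.ext (by omega)
    rw [this]
  · rfl
  · rfl
  · omega

lemma d_opair (d : Fin n → Fin n → ZMod 2) (hsym : ∀ k ℓ, d k ℓ = d ℓ k)
    (a b : Fin n) : d (opair a b).1 (opair a b).2 = d a b := by
  unfold opair; split_ifs
  · rfl
  · exact (hsym b a)

lemma pair_sum_eval (hn : 5 ≤ n) (i j : Fin n) (hij : i ≠ j)
    (d : Fin n → Fin n → ZMod 2) (hsym : ∀ k ℓ, d k ℓ = d ℓ k)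
    (hsupp : ∀ k ℓ, k ≠ i → k ≠ j → ℓ ≠ i → ℓ ≠ j → d k ℓ = 0)
    (m : ℕ) (hm : m < n) :
    (∑ p ∈ univ.filter (fun p : Fin n × Fin n =>
        (p.1 : ℕ) ≤ (p.2 : ℕ) ∧ (p.1 : ℕ) ≠ n - 2 ∧ (p.2 : ℕ) ≠ n - 2 ∧
          ((p.1 : ℕ) + (p.2 : ℕ)) % n = m), d p.1 p.2)
    = (if (i : ℕ) = n - 2 ∨ (m + n - (i:ℕ)) % n = n - 2 then 0
        else d i ⟨(m + n - (i:ℕ)) % n, Nat.mod_lt _ (by omega)⟩)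
      + (if (j : ℕ) = n - 2 ∨ (m + n - (j:ℕ)) % n = n - 2 then 0
        else d j ⟨(m + n - (j:ℕ)) % n, Nat.mod_lt _ (by omega)⟩)
      + (if ((i:ℕ) + (j:ℕ)) % n = m ∧ (i:ℕ) ≠ n - 2 ∧ (j:ℕ) ≠ n - 2 then d i j else 0) := by
  have hn0 : 0 < n := by omega
  set pi : Fin n := ⟨(m + n - (i:ℕ)) % n, Nat.mod_lt _ hn0⟩ with hpidef
  set pj : Fin n := ⟨(m + n - (j:ℕ)) % n, Nat.mod_lt _ hn0⟩ with hpjdef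
  have hpi : ((i:ℕ) + (pi:ℕ)) % n = m := (mod_partner hn0 i.isLt pi.isLt hm).mpr rfl
  have hpj : ((j:ℕ) + (pj:ℕ)) % n = m := (mod_partner hn0 j.isLt pj.isLt hm).mpr rfl
  have hcopi : ((i:ℕ) + (j:ℕ)) % n = m ↔ pi = j := by
    rw [mod_partner hn0 i.isLt j.isLt hm]
    constructor
    · intro h; exact Fin.ext h.symm
    · intro h; rw [← h]
  have hcopj : ((i:ℕ) + (j:ℕ)) % n = m ↔ pj = i := by
    rw [Nat.add_comm, mod_partner hn0 j.isLt i.isLt hm]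
    constructor
    · intro h; exact Fin.ext h.symm
    · intro h; rw [← h]
  -- membership characterization
  have hmem : ∀ p : Fin n × Fin n,
      ((p.1 : ℕ) ≤ (p.2 : ℕ) ∧ (p.1 : ℕ) ≠ n - 2 ∧ (p.2 : ℕ) ≠ n - 2 ∧
        ((p.1:ℕ)+(p.2:ℕ)) % n = m ∧ (p.1 = i ∨ p.1 = j ∨ p.2 = i ∨ p.2 = j))
      ↔ ((¬((i:ℕ) = n-2 ∨ (pi:ℕ) = n-2)) ∧ p = opair i pi) ∨
        ((¬((j:ℕ) = n-2 ∨ (pj:ℕ) = n-2)) ∧ p = opair j pj) := by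
    intro p
    constructor
    · rintro ⟨hord, h1, h2, hs, hR⟩
      rcases hR with hR | hR | hR | hR
      · left
        have h2' : p.2 = pi := by
          apply Fin.ext
          exact (mod_partner hn0 i.isLt p.2.isLt hm).mp (by rw [← hR]; exact hs)
        refine ⟨by push_neg; exact ⟨by rw [← hR]; exact h1, by rw [← h2']; exact h2⟩, ?_⟩
        unfold opair
        rw [if_pos (by rw [← hR, ← h2']; exact hord)]
        rw [← hR, ← h2']
      · right
        have h2' : p.2 = pj := by
          apply Fin.ext
          exact (mod_partner hn0 j.isLt p.2.isLt hm).mp (by rw [← hR]; exact hs)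
        refine ⟨by push_neg; exact ⟨by rw [← hR]; exact h1, by rw [← h2']; exact h2⟩, ?_⟩
        unfold opair
        rw [if_pos (by rw [← hR, ← h2']; exact hord)]
        rw [← hR, ← h2']
      · left
        have h1' : p.1 = pi := by
          apply Fin.ext
          exact (mod_partner hn0 i.isLt p.1.isLt hm).mp (by rw [← hR, Nat.add_comm]; exact hs)
        refine ⟨by push_neg; exact ⟨by rw [← hR]; exact h2, by rw [← h1']; exact h1⟩, ?_⟩
        unfold opair
        split_ifs with ho
        · have hv : (pi:ℕ) = (i:ℕ) := by rw [← h1', ← hR] at ho ⊢; omega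
          have hpii : pi = i := Fin.ext hv
          refine Prod.ext_iff.mpr ⟨?_, ?_⟩ <;> simp [h1', hpii, hR]
        · exact Prod.ext_iff.mpr ⟨h1', hR⟩
      · right
        have h1' : p.1 = pj := by
          apply Fin.ext
          exact (mod_partner hn0 j.isLt p.1.isLt hm).mp (by rw [← hR, Nat.add_comm]; exact hs)
        refine ⟨by push_neg; exact ⟨by rw [← hR]; exact h2, by rw [← h1']; exact h1⟩, ?_⟩
        unfold opair
        split_ifs with ho
        · have hv : (pj:ℕ) = (j:ℕ) := by rw [← h1', ← hR] at ho ⊢; omega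
          have hpjj : pj = j := Fin.ext hv
          refine Prod.ext_iff.mpr ⟨?_, ?_⟩ <;> simp [h1', hpjj, hR]
        · exact Prod.ext_iff.mpr ⟨h1', hR⟩
    · rintro (⟨hc, rfl⟩ | ⟨hc, rfl⟩)
      · push_neg at hc
        unfold opair
        split_ifs with ho
        · exact ⟨ho, hc.1, hc.2, hpi, Or.inl rfl⟩
        · exact ⟨show (pi:ℕ) ≤ (i:ℕ) by omega, hc.2, hc.1,
            show ((pi:ℕ) + (i:ℕ)) % n = m by rw [Nat.add_comm]; exact hpi,
            Or.inr (Or.inr (Or.inl rfl))⟩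
      · push_neg at hc
        unfold opair
        split_ifs with ho
        · exact ⟨ho, hc.1, hc.2, hpj, Or.inr (Or.inl rfl)⟩
        · exact ⟨show (pj:ℕ) ≤ (j:ℕ) by omega, hc.2, hc.1,
            show ((pj:ℕ) + (j:ℕ)) % n = m by rw [Nat.add_comm]; exact hpj,
            Or.inr (Or.inr (Or.inr rfl))⟩
  -- restrict the sum to the support
  rw [← Finset.sum_subset
    (show univ.filter (fun p : Fin n × Fin n =>
        (p.1 : ℕ) ≤ (p.2 : ℕ) ∧ (p.1 : ℕ) ≠ n - 2 ∧ (p.2 : ℕ) ≠ n - 2 ∧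
          ((p.1:ℕ)+(p.2:ℕ)) % n = m ∧ (p.1 = i ∨ p.1 = j ∨ p.2 = i ∨ p.2 = j))
      ⊆ univ.filter (fun p : Fin n × Fin n =>
        (p.1 : ℕ) ≤ (p.2 : ℕ) ∧ (p.1 : ℕ) ≠ n - 2 ∧ (p.2 : ℕ) ≠ n - 2 ∧
          ((p.1 : ℕ) + (p.2 : ℕ)) % n = m) by
      intro p hp
      simp only [mem_filter, mem_univ, true_and] at hp ⊢
      exact ⟨hp.1, hp.2.1, hp.2.2.1, hp.2.2.2.1⟩)
    (by
      intro p hp hnp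
      simp only [mem_filter, mem_univ, true_and] at hp hnp
      by_cases h1 : p.1 = i
      · exact absurd ⟨hp.1, hp.2.1, hp.2.2.1, hp.2.2.2, Or.inl h1⟩ hnp
      · by_cases h2 : p.1 = j
        · exact absurd ⟨hp.1, hp.2.1, hp.2.2.1, hp.2.2.2, Or.inr (Or.inl h2)⟩ hnp
        · by_cases h3 : p.2 = i
          · exact absurd ⟨hp.1, hp.2.1, hp.2.2.1, hp.2.2.2, Or.inr (Or.inr (Or.inl h3))⟩ hnp
          · by_cases h4 : p.2 = j
            · exact absurd ⟨hp.1, hp.2.1, hp.2.2.1, hp.2.2.2,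
                Or.inr (Or.inr (Or.inr h4))⟩ hnp
            · exact hsupp p.1 p.2 h1 h2 h3 h4)]
  by_cases hci : (i:ℕ) = n - 2 ∨ (pi:ℕ) = n - 2 <;>
    by_cases hcj : (j:ℕ) = n - 2 ∨ (pj:ℕ) = n - 2
  · -- both excluded: empty set
    have hset : univ.filter (fun p : Fin n × Fin n =>
        (p.1 : ℕ) ≤ (p.2 : ℕ) ∧ (p.1 : ℕ) ≠ n - 2 ∧ (p.2 : ℕ) ≠ n - 2 ∧
          ((p.1:ℕ)+(p.2:ℕ)) % n = m ∧ (p.1 = i ∨ p.1 = j ∨ p.2 = i ∨ p.2 = j)) = ∅ := by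
      ext p
      simp only [mem_filter, mem_univ, true_and, Finset.notMem_empty, iff_false]
      intro h
      rcases (hmem p).mp h with ⟨hc, _⟩ | ⟨hc, _⟩
      · exact hc hci
      · exact hc hcj
    rw [hset, Finset.sum_empty, if_pos hci, if_pos hcj]
    rw [if_neg]
    · ring
    · rintro ⟨hco, hi2, hj2⟩
      rcases hci with h | h
      · exact hi2 h
      · rw [(hcopi.mp hco)] at h
        exact hj2 h
  · -- only j-pair present
    have hset : univ.filter (fun p : Fin n × Fin n =>
        (p.1 : ℕ) ≤ (p.2 : ℕ) ∧ (p.1 : ℕ) ≠ n - 2 ∧ (p.2 : ℕ) ≠ n - 2 ∧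
          ((p.1:ℕ)+(p.2:ℕ)) % n = m ∧ (p.1 = i ∨ p.1 = j ∨ p.2 = i ∨ p.2 = j))
        = {opair j pj} := by
      ext p
      simp only [mem_filter, mem_univ, true_and, Finset.mem_singleton]
      rw [hmem p]
      constructor
      · rintro (⟨hc, _⟩ | ⟨_, h⟩)
        · exact absurd hci hc
        · exact h
      · intro h; exact Or.inr ⟨hcj, h⟩
    rw [hset, Finset.sum_singleton, d_opair d hsym, if_pos hci, if_neg hcj]
    rw [if_neg]
    · ring
    · rintro ⟨hco, hi2, hj2⟩
      rcases hci with h | h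
      · exact hi2 h
      · rw [(hcopi.mp hco)] at h
        exact hj2 h
  · -- only i-pair present
    have hset : univ.filter (fun p : Fin n × Fin n =>
        (p.1 : ℕ) ≤ (p.2 : ℕ) ∧ (p.1 : ℕ) ≠ n - 2 ∧ (p.2 : ℕ) ≠ n - 2 ∧
          ((p.1:ℕ)+(p.2:ℕ)) % n = m ∧ (p.1 = i ∨ p.1 = j ∨ p.2 = i ∨ p.2 = j))
        = {opair i pi} := by
      ext p
      simp only [mem_filter, mem_univ, true_and, Finset.mem_singleton]
      rw [hmem p]
      constructor
      · rintro (⟨_, h⟩ | ⟨hc, _⟩)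
        · exact h
        · exact absurd hcj hc
      · intro h; exact Or.inl ⟨hci, h⟩
    rw [hset, Finset.sum_singleton, d_opair d hsym, if_neg hci, if_pos hcj]
    rw [if_neg]
    · ring
    · rintro ⟨hco, hi2, hj2⟩
      rcases hcj with h | h
      · exact hj2 h
      · rw [(hcopj.mp hco)] at h
        exact hi2 h
  · -- both pairs present
    by_cases hco : ((i:ℕ) + (j:ℕ)) % n = m
    · -- the two pairs coincide: {i, j}
      have hpi2 : pi = j := hcopi.mp hco
      have hpj2 : pj = i := hcopj.mp hco
      have hset : univ.filter (fun p : Fin n × Fin n =>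
          (p.1 : ℕ) ≤ (p.2 : ℕ) ∧ (p.1 : ℕ) ≠ n - 2 ∧ (p.2 : ℕ) ≠ n - 2 ∧
            ((p.1:ℕ)+(p.2:ℕ)) % n = m ∧ (p.1 = i ∨ p.1 = j ∨ p.2 = i ∨ p.2 = j))
          = {opair i j} := by
        ext p
        simp only [mem_filter, mem_univ, true_and, Finset.mem_singleton]
        rw [hmem p]
        constructor
        · rintro (⟨_, h⟩ | ⟨_, h⟩)
          · rw [h, hpi2]
          · rw [h, hpj2, opair_comm]
        · intro h
          exact Or.inl ⟨hci, by rw [h, hpi2]⟩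
      rw [hset, Finset.sum_singleton, d_opair d hsym, if_neg hci, if_neg hcj, hpi2, hpj2]
      rw [if_pos ⟨hco, fun h => hci (Or.inl h), fun h => hcj (Or.inl h)⟩]
      rw [hsym j i]
      have h2 : (d i j : ZMod 2) + d i j = 0 := by
        rw [← two_mul, show (2 : ZMod 2) = 0 by decide, zero_mul]
      rw [add_assoc, h2, add_zero]
    · -- two distinct pairs
      have hne : opair i pi ≠ opair j pj := by
        intro h
        unfold opair at h
        split_ifs at h <;> rw [Prod.mk.injEq] at h
        · exact hij h.1
        · exact hco (hcopj.mpr h.1.symm)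
        · exact hco (hcopi.mpr h.1)
        · exact hij h.2
      have hset : univ.filter (fun p : Fin n × Fin n =>
          (p.1 : ℕ) ≤ (p.2 : ℕ) ∧ (p.1 : ℕ) ≠ n - 2 ∧ (p.2 : ℕ) ≠ n - 2 ∧
            ((p.1:ℕ)+(p.2:ℕ)) % n = m ∧ (p.1 = i ∨ p.1 = j ∨ p.2 = i ∨ p.2 = j))
          = {opair i pi, opair j pj} := by
        ext p
        simp only [mem_filter, mem_univ, true_and, Finset.mem_insert, Finset.mem_singleton]
        rw [hmem p]
        constructor
        · rintro (⟨_, h⟩ | ⟨_, h⟩)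
          · exact Or.inl h
          · exact Or.inr h
        · rintro (h | h)
          · exact Or.inl ⟨hci, h⟩
          · exact Or.inr ⟨hcj, h⟩
      rw [hset, Finset.sum_pair hne, d_opair d hsym, d_opair d hsym,
        if_neg hci, if_neg hcj, if_neg (by rintro ⟨h, _⟩; exact hco h)]
      ring

/-- The chain argument for Case A, stated abstractly over `ZMod n`. -/
lemma chainA {n : ℕ} (hn : 5 ≤ n) (hp : Nat.Prime n)
    (F G : ZMod n → ZMod 2) (ci cj cs cd : ZMod n)
    (hcdj : ci + cd = cj) (hcd0 : cd ≠ 0)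
    (hij : ci ≠ cj) (hcsi : cs ≠ ci) (hcsj : cs ≠ cj) (hcics1 : ci ≠ cs + 1) (hcjcs1 : cj ≠ cs + 1)
    (hFjGi : F cj = G ci)
    (hE1 : ∀ x : ZMod n, (if x + cd = cs then 0 else F (x + cd))
        + (if x = cs then 0 else G x) + (if x = ci then F cj else 0) = 0)
    (hE2 : ∀ x : ZMod n, x ≠ ci → x ≠ cj → x ≠ cs + 1 → F x + G x = 0)
    (hdiagAB : F ci + G cj = 0) :
    (∀ x : ZMod n, x ≠ cs → F x = 0) ∧ (∀ x : ZMod n, x ≠ cs → G x = 0)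
      ∧ F cs = G cs := by
  haveI : NeZero n := ⟨by omega⟩
  haveI : Fact (Nat.Prime n) := ⟨hp⟩
  haveI : Fact (1 < n) := ⟨by omega⟩
  have char2 : ∀ a : ZMod 2, a + a = 0 := fun a => by
    rw [← two_mul, show (2 : ZMod 2) = 0 by decide, zero_mul]
  have valcast : ∀ a : ℕ, a < n → ((a : ZMod n)).val = a := fun a ha => ZMod.val_cast_of_lt ha
  have castval : ∀ x : ZMod n, ((x.val : ℕ) : ZMod n) = x := fun x =>
    ZMod.natCast_rightInverse x
  have castinj : ∀ a b : ℕ, a < n → b < n → ((a : ZMod n) = (b : ZMod n)) → a = b := by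
    intro a b ha hb h
    have h2 := congrArg ZMod.val h
    rwa [valcast a ha, valcast b hb] at h2
  have hm1 : ((n - 1 : ℕ) : ZMod n) = -1 := by
    have h1 : ((n - 1 : ℕ) : ZMod n) + 1 = 0 := by
      rw [show (1 : ZMod n) = ((1 : ℕ) : ZMod n) by push_cast; rfl, ← Nat.cast_add,
        show n - 1 + 1 = n by omega, ZMod.natCast_self]
    linear_combination h1
  -- step 1 : c = 0
  have c0 : F cj = 0 := by
    have h := hE1 ci
    rw [if_neg (show ¬(ci + cd = cs) from fun hh => hcsj (by rw [← hcdj, hh])),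
      if_neg (Ne.symm hcsi), if_pos rfl, hcdj, hFjGi] at h
    -- h : G ci + G ci + G ci = 0
    rw [← hFjGi] at h
    linear_combination h - char2 (F cj)
  have hGci : G ci = 0 := by rw [← hFjGi]; exact c0
  have hβα : G cj = F ci := by linear_combination hdiagAB - char2 (F ci)
  have hcscs1 : cs ≠ cs + 1 := by
    intro h
    have h2 : (1 : ZMod n) = 0 := by linear_combination -h
    exact one_ne_zero h2
  have hFcsGcs : F cs + G cs = 0 := hE2 cs hcsi hcsj hcscs1
  have hGcsFcs : G cs = F cs := by linear_combination hFcsGcs - char2 (F cs)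
  -- clean form of E1
  have hE1' : ∀ x : ZMod n, F (x + cd) + G x
      = (if x = cs - cd then F cs else 0) + (if x = cs then G cs else 0) := by
    intro x
    have h := hE1 x
    rw [c0, ite_self, add_zero] at h
    have e1 : (x = cs - cd) = (x + cd = cs) := propext eq_sub_iff_add_eq
    simp only [e1]
    split_ifs with h1 h2 h2
    · rw [h1, h2]
    · rw [if_pos h1, if_neg h2, zero_add] at h
      rw [h1, h, add_zero]
    · subst h2
      rw [if_neg h1, if_pos rfl, add_zero] at h
      rw [h, zero_add]
    · rw [if_neg h1, if_neg h2] at h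
      rw [h, add_zero]
  -- E2 in equation form
  have hFG : ∀ x : ZMod n, F x + G x
      = (if x = ci then F ci else 0) + (if x = cj then F ci else 0)
        + (if x = cs + 1 then F (cs + 1) + G (cs + 1) else 0) := by
    intro x
    by_cases h1 : x = ci
    · rw [h1, if_pos rfl, if_neg hij, if_neg hcics1, hGci]; ring
    · by_cases h2 : x = cj
      · rw [h2, if_neg (fun hh => hij hh.symm), if_pos rfl, if_neg hcjcs1, c0, hβα]; ring
      · by_cases h3 : x = cs + 1
        · rw [h3, if_neg (fun hh => hcics1 hh.symm), if_neg (fun hh => hcjcs1 hh.symm),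
            if_pos rfl]; ring
        · rw [if_neg h1, if_neg h2, if_neg h3, hE2 x h1 h2 h3]; ring
  -- the step relation
  have hstep : ∀ x : ZMod n, F (x + cd) + F x
      = (if x = cs - cd then F cs else 0) + (if x = cs then G cs else 0)
        + ((if x = ci then F ci else 0) + (if x = cj then F ci else 0)
          + (if x = cs + 1 then F (cs + 1) + G (cs + 1) else 0)) := by
    intro x
    linear_combination hE1' x + hFG x - char2 (G x)
  -- w = 0 by summing over all of ZMod n
  have hw : F (cs + 1) + G (cs + 1) = 0 := by
    have h1 : ∑ x : ZMod n, (F (x + cd) + F x)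
        = ∑ x : ZMod n, ((if x = cs - cd then F cs else 0) + (if x = cs then G cs else 0)
          + ((if x = ci then F ci else 0) + (if x = cj then F ci else 0)
            + (if x = cs + 1 then F (cs + 1) + G (cs + 1) else 0))) :=
      Finset.sum_congr rfl (fun x _ => hstep x)
    rw [Finset.sum_add_distrib,
      show (∑ x : ZMod n, F (x + cd)) = ∑ x : ZMod n, F x from
        Fintype.sum_equiv (Equiv.addRight cd) _ _ (fun x => rfl),
      Finset.sum_add_distrib, Finset.sum_add_distrib, Finset.sum_add_distrib,
      Finset.sum_add_distrib,
      Finset.sum_ite_eq' univ (cs - cd), Finset.sum_ite_eq' univ cs,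
      Finset.sum_ite_eq' univ ci, Finset.sum_ite_eq' univ cj,
      Finset.sum_ite_eq' univ (cs + 1)] at h1
    simp only [Finset.mem_univ, if_true] at h1
    linear_combination -h1 + char2 (∑ x : ZMod n, F x) - char2 (F ci) - hFcsGcs
  -- fold w = 0 and G cs = F cs into the step relation
  have hstep3 : ∀ x : ZMod n, F (x + cd) + F x
      = (if x = cs - cd then F cs else 0) + (if x = cs then F cs else 0)
        + ((if x = ci then F ci else 0) + (if x = cj then F ci else 0)) := by
    intro x
    have h := hstep x
    rw [hw, hGcsFcs, ite_self, add_zero] at h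
    exact h
  -- the generic inequality helper
  have hneq : ∀ (a b : ℕ), a < n → b < n → a ≠ b →
      cs + (a : ZMod n) * cd ≠ cs + (b : ZMod n) * cd := by
    intro a b ha hb hab h
    have h2 : ((a : ZMod n) - b) * cd = 0 := by linear_combination h
    rcases mul_eq_zero.mp h2 with h3 | h3
    · exact hab (castinj a b ha hb (by linear_combination h3))
    · exact hcd0 h3
  have hrepr0 : cs + ((0 : ℕ) : ZMod n) * cd = cs := by push_cast; ring
  have hreprm : cs + ((n - 1 : ℕ) : ZMod n) * cd = cs - cd := by rw [hm1]; ring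
  -- set up p with cs + p cd = ci
  obtain ⟨p, hpn, hp0, hpn1, hp_eq⟩ :
      ∃ p : ℕ, p < n ∧ p ≠ 0 ∧ p ≠ n - 1 ∧ cs + (p : ZMod n) * cd = ci := by
    refine ⟨((ci - cs) * cd⁻¹).val, ZMod.val_lt _, ?_, ?_, ?_⟩
    · intro h
      have h2 : (ci - cs) * cd⁻¹ = 0 := by
        rw [← castval ((ci - cs) * cd⁻¹), h]
        push_cast
        rfl
      rcases mul_eq_zero.mp h2 with h3 | h3
      · exact hcsi (show cs = ci by linear_combination -h3)
      · exact inv_ne_zero hcd0 h3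
    · intro h
      have h2 : (ci - cs) * cd⁻¹ = -1 := by rw [← castval ((ci - cs) * cd⁻¹), h, hm1]
      have h3 : ci - cs = -cd := by
        have := congrArg (· * cd) h2
        rwa [mul_assoc, inv_mul_cancel₀ hcd0, mul_one, neg_one_mul] at this
      exact hcsj (show cs = cj by rw [← hcdj]; linear_combination -h3)
    · rw [castval ((ci - cs) * cd⁻¹)]
      rw [mul_assoc, inv_mul_cancel₀ hcd0, mul_one]
      ring
  have hq_eq : cs + ((p + 1 : ℕ) : ZMod n) * cd = cj := by
    push_cast
    rw [← hcdj]
    linear_combination hp_eq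
  have hqn : p + 1 < n := by omega
  -- the first chain, up to p
  have CH : ∀ k : ℕ, 1 ≤ k → k ≤ p → F (cs + (k : ZMod n) * cd) = 0 := by
    intro k
    induction k with
    | zero => omega
    | succ t ih =>
      intro _ htp
      by_cases ht : t = 0
      · -- base case k = 1 : use the step at x = cs
        subst ht
        have h := hstep3 cs
        rw [if_neg (show cs ≠ cs - cd from fun hh => hcd0 (by linear_combination hh)),
          if_pos rfl, if_neg hcsi, if_neg hcsj] at h
        simp only [zero_add, add_zero] at h
        -- h : F (cs + cd) + F cs = F cs
        have h2 : F (cs + cd) = 0 := by linear_combination h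
        rw [show cs + ((0 + 1 : ℕ) : ZMod n) * cd = cs + cd by push_cast; ring]
        exact h2
      · have ht1 : 1 ≤ t := by omega
        have htp' : t ≤ p := by omega
        have ihv := ih ht1 htp'
        have h := hstep3 (cs + (t : ZMod n) * cd)
        rw [if_neg (show _ ≠ cs - cd from fun hh =>
            hneq t (n-1) (by omega) (by omega) (by omega) (by rw [hreprm]; exact hh)),
          if_neg (show _ ≠ cs from fun hh =>
            hneq t 0 (by omega) (by omega) (by omega) (by rw [hrepr0]; exact hh)),
          if_neg (show _ ≠ ci from fun hh =>
            hneq t p (by omega) (by omega) (by omega) (by rw [hp_eq]; exact hh)),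
          if_neg (show _ ≠ cj from fun hh =>
            hneq t (p+1) (by omega) (by omega) (by omega) (by rw [hq_eq]; exact hh))] at h
        simp only [zero_add, add_zero] at h
        -- h : F (cs + t cd + cd) + F (cs + t cd) = 0
        have h2 : cs + (t : ZMod n) * cd + cd = cs + ((t + 1 : ℕ) : ZMod n) * cd := by
          push_cast; ring
        rw [h2, ihv, add_zero] at h
        exact h
  have α0 : F ci = 0 := by
    have := CH p (by omega) le_rfl
    rwa [hp_eq] at this
  -- step relation with α = 0
  have hstep4 : ∀ x : ZMod n, F (x + cd) + F x
      = (if x = cs - cd then F cs else 0) + (if x = cs then F cs else 0) := by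
    intro x
    have h := hstep3 x
    rw [α0, ite_self, ite_self, add_zero, add_zero] at h
    exact h
  -- the full chain
  have CH2 : ∀ k : ℕ, 1 ≤ k → k ≤ n - 1 → F (cs + (k : ZMod n) * cd) = 0 := by
    intro k
    induction k with
    | zero => omega
    | succ t ih =>
      intro _ htp
      by_cases ht : t = 0
      · subst ht
        have h := hstep4 cs
        rw [if_neg (show cs ≠ cs - cd from fun hh => hcd0 (by linear_combination hh)),
          if_pos rfl, zero_add] at h
        have h2 : F (cs + cd) = 0 := by linear_combination h
        rw [show cs + ((0 + 1 : ℕ) : ZMod n) * cd = cs + cd by push_cast; ring]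
        exact h2
      · have ht1 : 1 ≤ t := by omega
        have ihv := ih ht1 (by omega)
        have h := hstep4 (cs + (t : ZMod n) * cd)
        rw [if_neg (show _ ≠ cs - cd from fun hh =>
            hneq t (n-1) (by omega) (by omega) (by omega) (by rw [hreprm]; exact hh)),
          if_neg (show _ ≠ cs from fun hh =>
            hneq t 0 (by omega) (by omega) (by omega) (by rw [hrepr0]; exact hh))] at h
        simp only [zero_add, add_zero] at h
        have h2 : cs + (t : ZMod n) * cd + cd = cs + ((t + 1 : ℕ) : ZMod n) * cd := by
          push_cast; ring
        rw [h2, ihv, add_zero] at h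
        exact h
  -- conclude : F vanishes away from cs
  have hFall : ∀ x : ZMod n, x ≠ cs → F x = 0 := by
    intro x hx
    have hk_eq : cs + ((((x - cs) * cd⁻¹).val : ℕ) : ZMod n) * cd = x := by
      rw [castval ((x - cs) * cd⁻¹)]
      rw [mul_assoc, inv_mul_cancel₀ hcd0, mul_one]
      ring
    have hk0 : ((x - cs) * cd⁻¹).val ≠ 0 := by
      intro h
      have h2 : (x - cs) * cd⁻¹ = 0 := by
        rw [← castval ((x - cs) * cd⁻¹), h]
        push_cast
        rfl
      rcases mul_eq_zero.mp h2 with h3 | h3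
      · exact hx (by linear_combination h3)
      · exact inv_ne_zero hcd0 h3
    have hklt : ((x - cs) * cd⁻¹).val < n := ZMod.val_lt _
    have := CH2 (((x - cs) * cd⁻¹).val) (by omega) (by omega)
    rwa [hk_eq] at this
  refine ⟨hFall, ?_, hGcsFcs.symm⟩
  intro x hx
  have h := hFG x
  simp only [α0, ite_self, hw, hFall x hx, zero_add, add_zero] at h
  exact h

/-- main kernel lemma, assuming `i < j` -/
lemma kernelAux (hn : 5 ≤ n) (hp : Nat.Prime n) (i j : Fin n) (hlt : (i:ℕ) < (j:ℕ))
    (d : Fin n → Fin n → ZMod 2)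
    (hsym : ∀ k ℓ, d k ℓ = d ℓ k)
    (hrow : ∀ h : Fin n, (h : ℕ) < n - 2 →
      ∑ ℓ ∈ univ.filter (fun ℓ : Fin n => (ℓ : ℕ) < n - 1), d h ℓ = 0)
    (hdiag : ∑ ℓ ∈ univ.filter (fun ℓ : Fin n => (ℓ : ℕ) < n - 1), d ℓ ℓ = 0)
    (hDm : ∀ m : ℕ, m < n →
      (∑ p ∈ univ.filter (fun p : Fin n × Fin n =>
          (p.1 : ℕ) ≤ (p.2 : ℕ) ∧ (p.1 : ℕ) ≠ n - 2 ∧ (p.2 : ℕ) ≠ n - 2 ∧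
            ((p.1 : ℕ) + (p.2 : ℕ)) % n = m),
          d p.1 p.2) + d ⟨n - 1, by omega⟩ ⟨n - 2, by omega⟩ = 0)
    (hsupp : ∀ k ℓ : Fin n, k ≠ i → k ≠ j → ℓ ≠ i → ℓ ≠ j → d k ℓ = 0) :
    d = 0 := by
  have hn0 : 0 < n := by omega
  have hij : i ≠ j := fun h => by rw [h] at hlt; omega
  have char2 : ∀ a : ZMod 2, a + a = 0 := fun a => by
    rw [← two_mul, show (2 : ZMod 2) = 0 by decide, zero_mul]
  set n1 : Fin n := ⟨n - 1, by omega⟩ with hn1def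
  set n2 : Fin n := ⟨n - 2, by omega⟩ with hn2def
  -- pointwise form of the D_m constraints
  have hDm' : ∀ m : ℕ, m < n →
      (if (i : ℕ) = n - 2 ∨ (m + n - (i:ℕ)) % n = n - 2 then 0
        else d i ⟨(m + n - (i:ℕ)) % n, Nat.mod_lt _ hn0⟩)
      + (if (j : ℕ) = n - 2 ∨ (m + n - (j:ℕ)) % n = n - 2 then 0
        else d j ⟨(m + n - (j:ℕ)) % n, Nat.mod_lt _ hn0⟩)
      + (if ((i:ℕ) + (j:ℕ)) % n = m ∧ (i:ℕ) ≠ n - 2 ∧ (j:ℕ) ≠ n - 2 then d i j else 0)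
      + d n1 n2 = 0 := by
    intro m hm
    have h0 := hDm m hm
    rw [pair_sum_eval hn i j hij d hsym hsupp m hm] at h0
    exact h0
  -- pointwise form of row constraints at non-failed rows
  have hrow' : ∀ h : Fin n, (h:ℕ) < n - 2 → h ≠ i → h ≠ j →
      (if (i:ℕ) < n - 1 then d h i else 0) + (if (j:ℕ) < n - 1 then d h j else 0) = 0 := by
    intro h hh hhi hhj
    have h0 := hrow h hh
    rw [sum_support2 i j hij _ (fun ℓ => d h ℓ)
      (fun x hx1 hx2 => hsupp h x hhi hhj hx1 hx2)] at h0
    exact h0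
  have hdiag' :
      (if (i:ℕ) < n - 1 then d i i else 0) + (if (j:ℕ) < n - 1 then d j j else 0) = 0 := by
    have h0 := hdiag
    rw [sum_support2 i j hij _ (fun ℓ => d ℓ ℓ)
      (fun x hx1 hx2 => hsupp x x hx1 hx2 hx1 hx2)] at h0
    exact h0
  -- realization of partners
  have hreal : ∀ x ℓ : Fin n, ((((x:ℕ) + (ℓ:ℕ)) % n) + n - (x:ℕ)) % n = (ℓ:ℕ) :=
    fun x ℓ => ((mod_partner hn0 x.isLt ℓ.isLt (Nat.mod_lt _ hn0)).mp rfl).symm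
  -- final assembly given both failed rows vanish
  have assemble : (∀ ℓ, d i ℓ = 0) → (∀ ℓ, d j ℓ = 0) → d = 0 := by
    intro hri hrj
    funext k ℓ
    show d k ℓ = 0
    by_cases hk1 : k = i
    · rw [hk1]; exact hri ℓ
    · by_cases hk2 : k = j
      · rw [hk2]; exact hrj ℓ
      · by_cases hl1 : ℓ = i
        · rw [hl1, hsym]; exact hri k
        · by_cases hl2 : ℓ = j
          · rw [hl2, hsym]; exact hrj k
          · exact hsupp k ℓ hk1 hk2 hl1 hl2
  have hjcase : (j:ℕ) < n - 2 ∨ (j:ℕ) = n - 2 ∨ (j:ℕ) = n - 1 := by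
    have := j.isLt; omega
  rcases hjcase with hjv | hjv | hjv
  · -- CASE A : i < j < n - 2
    have hivA : (i:ℕ) < n - 2 := by omega
    haveI : NeZero n := ⟨by omega⟩
    have valcast : ∀ a : ℕ, a < n → ((a : ZMod n)).val = a := fun a ha => ZMod.val_cast_of_lt ha
    have castval : ∀ x : ZMod n, ((x.val : ℕ) : ZMod n) = x := fun x =>
      ZMod.natCast_rightInverse x
    have castinj : ∀ a b : ℕ, a < n → b < n → ((a : ZMod n) = (b : ZMod n)) → a = b := by
      intro a b ha hb h
      have h2 := congrArg ZMod.val h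
      rwa [valcast a ha, valcast b hb] at h2
    set F : ZMod n → ZMod 2 := fun x => d i ⟨x.val, ZMod.val_lt x⟩ with hF
    set G : ZMod n → ZMod 2 := fun x => d j ⟨x.val, ZMod.val_lt x⟩ with hG
    have dF : ∀ (a : ℕ) (ha : a < n), d i ⟨a, ha⟩ = F ((a : ZMod n)) := by
      intro a ha
      simp only [hF]
      congr 1
      exact Fin.ext (valcast a ha).symm
    have dG : ∀ (a : ℕ) (ha : a < n), d j ⟨a, ha⟩ = G ((a : ZMod n)) := by
      intro a ha
      simp only [hG]
      congr 1
      exact Fin.ext (valcast a ha).symm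
    have dF' : ∀ ℓ : Fin n, d i ℓ = F (((ℓ:ℕ) : ZMod n)) := fun ℓ => dF (ℓ:ℕ) ℓ.isLt
    have dG' : ∀ ℓ : Fin n, d j ℓ = G (((ℓ:ℕ) : ZMod n)) := fun ℓ => dG (ℓ:ℕ) ℓ.isLt
    -- the distinguished elements of ZMod n
    have hijZ : ((i:ℕ) : ZMod n) ≠ ((j:ℕ) : ZMod n) :=
      fun h => by have := castinj _ _ i.isLt j.isLt h; omega
    have hcsi : ((n-2:ℕ) : ZMod n) ≠ ((i:ℕ) : ZMod n) :=
      fun h => by have := castinj _ _ (by omega) i.isLt h; omega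
    have hcsj : ((n-2:ℕ) : ZMod n) ≠ ((j:ℕ) : ZMod n) :=
      fun h => by have := castinj _ _ (by omega) j.isLt h; omega
    have hcs1 : ((n-1:ℕ) : ZMod n) = ((n-2:ℕ) : ZMod n) + 1 := by
      rw [show (1 : ZMod n) = ((1:ℕ) : ZMod n) by push_cast; rfl, ← Nat.cast_add,
        show n - 2 + 1 = n - 1 by omega]
    have hcics1 : ((i:ℕ) : ZMod n) ≠ ((n-2:ℕ) : ZMod n) + 1 := by
      rw [← hcs1]
      exact fun h => by have := castinj _ _ i.isLt (by omega) h; omega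
    have hcjcs1 : ((j:ℕ) : ZMod n) ≠ ((n-2:ℕ) : ZMod n) + 1 := by
      rw [← hcs1]
      exact fun h => by have := castinj _ _ j.isLt (by omega) h; omega
    have hcdj : ((i:ℕ) : ZMod n) + (((j:ℕ) : ZMod n) - ((i:ℕ) : ZMod n)) = ((j:ℕ) : ZMod n) :=
      by ring
    have hcd0 : ((j:ℕ) : ZMod n) - ((i:ℕ) : ZMod n) ≠ 0 :=
      sub_ne_zero_of_ne (Ne.symm hijZ)
    have hFjGi : F (((j:ℕ) : ZMod n)) = G (((i:ℕ) : ZMod n)) := by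
      rw [← dF' j, ← dG' i]
      exact hsym i j
    have hdiagA : d i i + d j j = 0 := by
      have h0 := hdiag'
      rwa [if_pos (show (i:ℕ) < n - 1 by omega), if_pos (show (j:ℕ) < n - 1 by omega)] at h0
    have hdiagABZ : F (((i:ℕ) : ZMod n)) + G (((j:ℕ) : ZMod n)) = 0 := by
      rw [← dF' i, ← dG' j]
      exact hdiagA
    have hrowA : ∀ h : Fin n, (h:ℕ) < n - 2 → h ≠ i → h ≠ j → d h i + d h j = 0 := by
      intro h a b c
      have h0 := hrow' h a b c
      rwa [if_pos (show (i:ℕ) < n - 1 by omega), if_pos (show (j:ℕ) < n - 1 by omega)] at h0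
    -- the sigma fact : d i n2 + d j n2 = 0
    have hin2' : i ≠ n2 := fun e => by
      have h2 : (i:ℕ) = n - 2 := congrArg Fin.val e
      omega
    have hjn2' : j ≠ n2 := fun e => by
      have h2 : (j:ℕ) = n - 2 := congrArg Fin.val e
      omega
    have hsig : d i n2 + d j n2 = 0 := by
      have hsum2 : ∑ ℓ ∈ univ.filter (fun ℓ : Fin n => (ℓ:ℕ) < n - 1),
          (d i ℓ + d j ℓ) = 0 := by
        rw [Finset.sum_add_distrib, hrow i hivA, hrow j (by omega), add_zero]
      have hsub : ({i, j, n2} : Finset (Fin n)) ⊆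
          univ.filter (fun ℓ : Fin n => (ℓ:ℕ) < n - 1) := by
        intro x hx
        simp only [Finset.mem_insert, Finset.mem_singleton] at hx
        simp only [mem_filter, mem_univ, true_and]
        rcases hx with rfl | rfl | rfl
        · omega
        · omega
        · show n - 2 < n - 1; omega
      have h3 : ∑ ℓ ∈ ({i, j, n2} : Finset (Fin n)), (d i ℓ + d j ℓ) = 0 := by
        rw [Finset.sum_subset hsub ?_]
        · exact hsum2
        · intro x hx hnx
          simp only [mem_filter, mem_univ, true_and] at hx
          simp only [Finset.mem_insert, Finset.mem_singleton, not_or] at hnx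
          have hxlt : (x:ℕ) < n - 2 := by
            have hne : (x:ℕ) ≠ n - 2 := fun h => hnx.2.2 (Fin.ext h)
            omega
          have h0 := hrowA x hxlt hnx.1 hnx.2.1
          rw [hsym i x, hsym j x]
          exact h0
      rw [Finset.sum_insert (by
          simp only [Finset.mem_insert, Finset.mem_singleton, not_or]
          exact ⟨hij, hin2'⟩),
        Finset.sum_insert (by simp only [Finset.mem_singleton]; exact hjn2'),
        Finset.sum_singleton] at h3
      rw [hsym j i] at h3
      linear_combination h3 - hdiagA - char2 (d i j)
    -- hypothesis E2 for chainA
    have hE2Z : ∀ x : ZMod n, x ≠ ((i:ℕ) : ZMod n) → x ≠ ((j:ℕ) : ZMod n) →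
        x ≠ ((n-2:ℕ) : ZMod n) + 1 → F x + G x = 0 := by
      intro x h1 h2 h3
      have hxn : x.val < n := ZMod.val_lt x
      have hvi : x.val ≠ (i:ℕ) := fun h => h1 (by rw [← castval x, h])
      have hvj : x.val ≠ (j:ℕ) := fun h => h2 (by rw [← castval x, h])
      have hv1 : x.val ≠ n - 1 := fun h => h3 (by rw [← castval x, h, hcs1])
      by_cases hv2 : x.val = n - 2
      · have he : (⟨x.val, ZMod.val_lt x⟩ : Fin n) = n2 := by
          rw [hn2def]; exact Fin.ext hv2
        show d i ⟨x.val, ZMod.val_lt x⟩ + d j ⟨x.val, ZMod.val_lt x⟩ = 0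
        rw [he]
        exact hsig
      · have hxlt : x.val < n - 2 := by omega
        have h0 := hrowA ⟨x.val, ZMod.val_lt x⟩ hxlt
          (fun e => hvi (congrArg Fin.val e)) (fun e => hvj (congrArg Fin.val e))
        show d i ⟨x.val, ZMod.val_lt x⟩ + d j ⟨x.val, ZMod.val_lt x⟩ = 0
        rw [hsym i ⟨x.val, ZMod.val_lt x⟩, hsym j ⟨x.val, ZMod.val_lt x⟩]
        exact h0
    -- d n1 n2 = 0
    have hXz : d n1 n2 = 0 := by
      apply hsupp
      · exact fun e => by
          have h2 : n - 1 = (i:ℕ) := congrArg Fin.val e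
          omega
      · exact fun e => by
          have h2 : n - 1 = (j:ℕ) := congrArg Fin.val e
          omega
      · exact Ne.symm hin2'
      · exact Ne.symm hjn2'
    -- hypothesis E1 for chainA
    have hE1Z : ∀ x : ZMod n,
        (if x + (((j:ℕ) : ZMod n) - ((i:ℕ) : ZMod n)) = ((n-2:ℕ) : ZMod n) then 0
          else F (x + (((j:ℕ) : ZMod n) - ((i:ℕ) : ZMod n))))
        + (if x = ((n-2:ℕ) : ZMod n) then 0 else G x)
        + (if x = ((i:ℕ) : ZMod n) then F (((j:ℕ) : ZMod n)) else 0) = 0 := by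
      intro x
      have hmlt : (x + ((j:ℕ) : ZMod n)).val < n := ZMod.val_lt _
      have hmcast : (((x + ((j:ℕ) : ZMod n)).val : ℕ) : ZMod n) = x + ((j:ℕ) : ZMod n) :=
        castval _
      set m : ℕ := (x + ((j:ℕ) : ZMod n)).val with hmdef
      have h0 := hDm' m hmlt
      have ha1 : (m + n - (i:ℕ)) % n < n := Nat.mod_lt _ hn0
      have ha2 : (m + n - (j:ℕ)) % n < n := Nat.mod_lt _ hn0
      have hc1 : (((m + n - (i:ℕ)) % n : ℕ) : ZMod n)
          = x + (((j:ℕ) : ZMod n) - ((i:ℕ) : ZMod n)) := by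
        rw [ZMod.natCast_mod, Nat.cast_sub (by omega : (i:ℕ) ≤ m + n), Nat.cast_add,
          ZMod.natCast_self, hmcast]
        ring
      have hc2 : (((m + n - (j:ℕ)) % n : ℕ) : ZMod n) = x := by
        rw [ZMod.natCast_mod, Nat.cast_sub (by omega : (j:ℕ) ≤ m + n), Nat.cast_add,
          ZMod.natCast_self, hmcast]
        ring
      have hcnd1 : ((m + n - (i:ℕ)) % n = n - 2)
          ↔ (x + (((j:ℕ) : ZMod n) - ((i:ℕ) : ZMod n)) = ((n-2:ℕ) : ZMod n)) := by
        constructor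
        · intro h
          rw [← hc1, h]
        · intro h
          exact castinj _ _ ha1 (by omega) (by rw [hc1, h])
      have hcnd2 : ((m + n - (j:ℕ)) % n = n - 2) ↔ (x = ((n-2:ℕ) : ZMod n)) := by
        constructor
        · intro h
          rw [← hc2, h]
        · intro h
          exact castinj _ _ ha2 (by omega) (by rw [hc2, h])
      have hcnd3 : (((i:ℕ) + (j:ℕ)) % n = m) ↔ (x = ((i:ℕ) : ZMod n)) := by
        constructor
        · intro h
          have h2 := congrArg (Nat.cast : ℕ → ZMod n) h
          rw [ZMod.natCast_mod, Nat.cast_add, hmcast] at h2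
          linear_combination -h2
        · intro h
          refine castinj _ _ (Nat.mod_lt _ hn0) hmlt ?_
          rw [ZMod.natCast_mod, Nat.cast_add, hmcast, h]
      -- translate the three terms of h0
      have ht1 : (if (i : ℕ) = n - 2 ∨ (m + n - (i:ℕ)) % n = n - 2 then (0 : ZMod 2)
            else d i ⟨(m + n - (i:ℕ)) % n, Nat.mod_lt _ hn0⟩)
          = (if x + (((j:ℕ) : ZMod n) - ((i:ℕ) : ZMod n)) = ((n-2:ℕ) : ZMod n) then 0
            else F (x + (((j:ℕ) : ZMod n) - ((i:ℕ) : ZMod n)))) := by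
        by_cases hcnd : x + (((j:ℕ) : ZMod n) - ((i:ℕ) : ZMod n)) = ((n-2:ℕ) : ZMod n)
        · rw [if_pos (Or.inr (hcnd1.mpr hcnd)), if_pos hcnd]
        · rw [if_neg (show ¬((i : ℕ) = n - 2 ∨ (m + n - (i:ℕ)) % n = n - 2) from by
            push_neg
            exact ⟨by omega, fun h => hcnd (hcnd1.mp h)⟩), if_neg hcnd, dF _ ha1, hc1]
      have ht2 : (if (j : ℕ) = n - 2 ∨ (m + n - (j:ℕ)) % n = n - 2 then (0 : ZMod 2)
            else d j ⟨(m + n - (j:ℕ)) % n, Nat.mod_lt _ hn0⟩)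
          = (if x = ((n-2:ℕ) : ZMod n) then 0 else G x) := by
        by_cases hcnd : x = ((n-2:ℕ) : ZMod n)
        · rw [if_pos (Or.inr (hcnd2.mpr hcnd)), if_pos hcnd]
        · rw [if_neg (show ¬((j : ℕ) = n - 2 ∨ (m + n - (j:ℕ)) % n = n - 2) from by
            push_neg
            exact ⟨by omega, fun h => hcnd (hcnd2.mp h)⟩), if_neg hcnd, dG _ ha2, hc2]
      have ht3 : (if ((i:ℕ) + (j:ℕ)) % n = m ∧ (i:ℕ) ≠ n - 2 ∧ (j:ℕ) ≠ n - 2 then d i j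
            else (0 : ZMod 2))
          = (if x = ((i:ℕ) : ZMod n) then F (((j:ℕ) : ZMod n)) else 0) := by
        by_cases hcnd : x = ((i:ℕ) : ZMod n)
        · rw [if_pos ⟨hcnd3.mpr hcnd, by omega, by omega⟩, if_pos hcnd, dF' j]
        · rw [if_neg (show ¬(((i:ℕ) + (j:ℕ)) % n = m ∧ (i:ℕ) ≠ n - 2 ∧ (j:ℕ) ≠ n - 2) from
            fun hc => hcnd (hcnd3.mp hc.1)), if_neg hcnd]
      rw [ht1, ht2, ht3, hXz, add_zero] at h0
      exact h0
    -- apply the chain lemma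
    obtain ⟨hFz, hGz, hFGs⟩ := chainA hn hp F G ((i:ℕ) : ZMod n) ((j:ℕ) : ZMod n)
      ((n-2:ℕ) : ZMod n) (((j:ℕ) : ZMod n) - ((i:ℕ) : ZMod n))
      hcdj hcd0 hijZ hcsi hcsj hcics1 hcjcs1 hFjGi hE1Z hE2Z hdiagABZ
    -- F at sigma vanishes too, using the row-i sum
    have hFs0 : F (((n-2:ℕ) : ZMod n)) = 0 := by
      have h0 := hrow i hivA
      rw [Finset.sum_eq_single_of_mem n2
        (by simp only [mem_filter, mem_univ, true_and]; show n - 2 < n - 1; omega)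
        (fun b hb hbn => by
          have hbv : (b:ℕ) ≠ n - 2 := fun h => hbn (Fin.ext h)
          rw [dF' b]
          exact hFz _ (fun h => hbv (castinj _ _ b.isLt (by omega) h)))] at h0
      rw [show d i n2 = F (((n-2:ℕ) : ZMod n)) from dF (n-2) (by omega)] at h0
      exact h0
    have hGs0 : G (((n-2:ℕ) : ZMod n)) = 0 := by rw [← hFGs]; exact hFs0
    have hri : ∀ ℓ : Fin n, d i ℓ = 0 := by
      intro ℓ
      rw [dF' ℓ]
      by_cases hv : (ℓ:ℕ) = n - 2
      · rw [hv]; exact hFs0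
      · exact hFz _ (fun h => hv (castinj _ _ ℓ.isLt (by omega) h))
    have hrj : ∀ ℓ : Fin n, d j ℓ = 0 := by
      intro ℓ
      rw [dG' ℓ]
      by_cases hv : (ℓ:ℕ) = n - 2
      · rw [hv]; exact hGs0
      · exact hGz _ (fun h => hv (castinj _ _ ℓ.isLt (by omega) h))
    exact assemble hri hrj
  · -- CASE B : i < n-2, j = n-2
    have hiv : (i:ℕ) < n - 2 := by omega
    have hjn2 : j = n2 := Fin.ext hjv
    have hin2 : (i:ℕ) ≠ n - 2 := by omega
    have key : ∀ m : ℕ, m < n →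
        (if (m + n - (i:ℕ)) % n = n - 2 then 0
          else d i ⟨(m + n - (i:ℕ)) % n, Nat.mod_lt _ hn0⟩) + d n1 n2 = 0 := by
      intro m hm
      have h0 := hDm' m hm
      rw [if_pos (show (j:ℕ) = n - 2 ∨ (m + n - (j:ℕ)) % n = n - 2 from Or.inl hjv),
        if_neg (show ¬(((i:ℕ) + (j:ℕ)) % n = m ∧ (i:ℕ) ≠ n - 2 ∧ (j:ℕ) ≠ n - 2) from
          fun hc => hc.2.2 hjv),
        add_zero, add_zero] at h0
      by_cases hc : (m + n - (i:ℕ)) % n = n - 2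
      · rw [if_pos hc]
        rw [if_pos (show (i:ℕ) = n - 2 ∨ (m + n - (i:ℕ)) % n = n - 2 from Or.inr hc)] at h0
        exact h0
      · rw [if_neg hc]
        rw [if_neg (show ¬((i:ℕ) = n - 2 ∨ (m + n - (i:ℕ)) % n = n - 2) from by
          push_neg; exact ⟨hin2, hc⟩)] at h0
        exact h0
    have hX : d n1 n2 = 0 := by
      have h0 := key (((i:ℕ) + (n2:ℕ)) % n) (Nat.mod_lt _ hn0)
      rw [if_pos (hreal i n2)] at h0
      rw [zero_add] at h0
      exact h0
    have hri0 : ∀ ℓ : Fin n, ℓ ≠ n2 → d i ℓ = 0 := by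
      intro ℓ hℓ
      have hlv : (ℓ:ℕ) ≠ n - 2 := fun h => hℓ (Fin.ext h)
      have h0 := key (((i:ℕ) + (ℓ:ℕ)) % n) (Nat.mod_lt _ hn0)
      rw [if_neg (by rw [hreal i ℓ]; exact hlv), hX, add_zero] at h0
      have he : (⟨((((i:ℕ) + (ℓ:ℕ)) % n) + n - (i:ℕ)) % n, Nat.mod_lt _ hn0⟩ : Fin n) = ℓ :=
        Fin.ext (hreal i ℓ)
      rwa [he] at h0
    have hrin2 : d i n2 = 0 := by
      have h0 := hrow i hiv
      rw [Finset.sum_eq_single_of_mem n2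
        (by simp only [mem_filter, mem_univ, true_and]; show n - 2 < n - 1; omega)
        (fun b _ hb => hri0 b hb)] at h0
      exact h0
    have hri : ∀ ℓ, d i ℓ = 0 := by
      intro ℓ
      by_cases hℓ : ℓ = n2
      · rw [hℓ]; exact hrin2
      · exact hri0 ℓ hℓ
    have hrj : ∀ ℓ, d j ℓ = 0 := by
      intro ℓ
      by_cases hl1 : ℓ = i
      · rw [hl1, hsym]; exact hri j
      · by_cases hl2 : ℓ = n2
        · rw [hl2, ← hjn2]
          have h0 := hdiag'
          rw [if_pos (show (i:ℕ) < n - 1 by omega),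
            if_pos (show (j:ℕ) < n - 1 by omega), hri i, zero_add] at h0
          exact h0
        · by_cases hl3 : ℓ = n1
          · rw [hl3, hsym j n1, hjn2]
            exact hX
          · have hlv2 : (ℓ:ℕ) < n - 2 := by
              have h2 : (ℓ:ℕ) ≠ n - 2 := fun h => hl2 (Fin.ext h)
              have h3 : (ℓ:ℕ) ≠ n - 1 := fun h => hl3 (Fin.ext h)
              have := ℓ.isLt
              omega
            have h0 := hrow' ℓ hlv2 hl1 (fun e => hl2 (by rw [e, hjn2]))
            rw [if_pos (show (i:ℕ) < n - 1 by omega),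
              if_pos (show (j:ℕ) < n - 1 by omega)] at h0
            rw [hsym ℓ i, hri ℓ, zero_add] at h0
            rw [hsym]
            exact h0
    exact assemble hri hrj
  · -- CASES C/D : j = n-1
    have hjn1 : j = n1 := Fin.ext hjv
    have hiv : (i:ℕ) < n - 1 := by omega
    rcases Nat.lt_or_ge (i:ℕ) (n-2) with hiv2 | hiv2
    · -- CASE C : i < n-2, j = n-1
      have hin2 : (i:ℕ) ≠ n - 2 := by omega
      have hF0 : ∀ h : Fin n, h ≠ i → (h:ℕ) < n - 2 → d h i = 0 := by
        intro h hhi hh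
        have h0 := hrow' h hh hhi (fun e => by rw [e] at hh; omega)
        rw [if_pos (show (i:ℕ) < n - 1 by omega),
          if_neg (show ¬((j:ℕ) < n - 1) by omega), add_zero] at h0
        exact h0
      have hFii : d i i = 0 := by
        have h0 := hdiag'
        rw [if_pos (show (i:ℕ) < n - 1 by omega),
          if_neg (show ¬((j:ℕ) < n - 1) by omega), add_zero] at h0
        exact h0
      have hFlow : ∀ ℓ : Fin n, (ℓ:ℕ) < n - 2 → d i ℓ = 0 := by
        intro ℓ hℓ
        by_cases he : ℓ = i
        · rw [he]; exact hFii
        · rw [hsym]; exact hF0 ℓ he hℓ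
      have hFn2 : d i n2 = 0 := by
        have h0 := hrow i hiv2
        rw [Finset.sum_eq_single_of_mem n2
          (by simp only [mem_filter, mem_univ, true_and]; show n - 2 < n - 1; omega)
          (fun b hb hbn => by
            have hbb : (b:ℕ) < n - 1 := (mem_filter.mp hb).2
            have hbv : (b:ℕ) ≠ n - 2 := fun h => hbn (Fin.ext h)
            exact hFlow b (by omega))] at h0
        exact h0
      have key : ∀ m : ℕ, m < n →
          (if (m + n - (j:ℕ)) % n = n - 2 then 0
            else d j ⟨(m + n - (j:ℕ)) % n, Nat.mod_lt _ hn0⟩) + d n1 n2 = 0 := by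
        intro m hm
        have h0 := hDm' m hm
        have hTic : (if (i : ℕ) = n - 2 ∨ (m + n - (i:ℕ)) % n = n - 2 then 0
              else d i ⟨(m + n - (i:ℕ)) % n, Nat.mod_lt _ hn0⟩)
            = (if ((i:ℕ) + (j:ℕ)) % n = m ∧ (i:ℕ) ≠ n - 2 ∧ (j:ℕ) ≠ n - 2 then d i j
              else 0) := by
          by_cases hc : (m + n - (i:ℕ)) % n = n - 1
          · have hco : ((i:ℕ) + (j:ℕ)) % n = m := by
              rw [mod_partner hn0 i.isLt j.isLt hm, hjv, hc]
            rw [if_neg (show ¬((i:ℕ) = n - 2 ∨ (m + n - (i:ℕ)) % n = n - 2) by omega),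
              if_pos (show ((i:ℕ) + (j:ℕ)) % n = m ∧ (i:ℕ) ≠ n - 2 ∧ (j:ℕ) ≠ n - 2 from
                ⟨hco, by omega, by omega⟩)]
            have he : (⟨(m + n - (i:ℕ)) % n, Nat.mod_lt _ hn0⟩ : Fin n) = j :=
              Fin.ext (show (m + n - (i:ℕ)) % n = (j:ℕ) by omega)
            rw [he]
          · have hnco : ¬(((i:ℕ) + (j:ℕ)) % n = m ∧ (i:ℕ) ≠ n - 2 ∧ (j:ℕ) ≠ n - 2) := by
              rintro ⟨hco, -, -⟩
              rw [mod_partner hn0 i.isLt j.isLt hm] at hco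
              exact hc (by omega)
            rw [if_neg hnco]
            by_cases hc2 : (m + n - (i:ℕ)) % n = n - 2
            · rw [if_pos (show (i:ℕ) = n - 2 ∨ (m + n - (i:ℕ)) % n = n - 2 from Or.inr hc2)]
            · rw [if_neg (show ¬((i:ℕ) = n - 2 ∨ (m + n - (i:ℕ)) % n = n - 2) by
                push_neg; exact ⟨hin2, hc2⟩)]
              apply hFlow
              show (m + n - (i:ℕ)) % n < n - 2
              have := Nat.mod_lt (m + n - (i:ℕ)) hn0
              omega
        rw [hTic] at h0
        have hsame : (if (j:ℕ) = n - 2 ∨ (m + n - (j:ℕ)) % n = n - 2 then (0:ZMod 2)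
              else d j ⟨(m + n - (j:ℕ)) % n, Nat.mod_lt _ hn0⟩)
            = (if (m + n - (j:ℕ)) % n = n - 2 then 0
              else d j ⟨(m + n - (j:ℕ)) % n, Nat.mod_lt _ hn0⟩) := by
          by_cases hc : (m + n - (j:ℕ)) % n = n - 2
          · rw [if_pos (show (j:ℕ) = n - 2 ∨ (m + n - (j:ℕ)) % n = n - 2 from Or.inr hc),
              if_pos hc]
          · rw [if_neg (show ¬((j:ℕ) = n - 2 ∨ (m + n - (j:ℕ)) % n = n - 2) by
              push_neg; exact ⟨by omega, hc⟩), if_neg hc]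
        rw [hsame] at h0
        linear_combination h0 - char2 (if ((i:ℕ) + (j:ℕ)) % n = m ∧ (i:ℕ) ≠ n - 2 ∧
          (j:ℕ) ≠ n - 2 then d i j else 0)
      have hX : d n1 n2 = 0 := by
        have h0 := key (((j:ℕ) + (n2:ℕ)) % n) (Nat.mod_lt _ hn0)
        rw [if_pos (hreal j n2), zero_add] at h0
        exact h0
      have hrj : ∀ ℓ, d j ℓ = 0 := by
        intro ℓ
        by_cases hℓ : ℓ = n2
        · rw [hℓ, hjn1]; exact hX
        · have hlv : (ℓ:ℕ) ≠ n - 2 := fun h => hℓ (Fin.ext h)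
          have h0 := key (((j:ℕ) + (ℓ:ℕ)) % n) (Nat.mod_lt _ hn0)
          rw [if_neg (by rw [hreal j ℓ]; exact hlv), hX, add_zero] at h0
          have he : (⟨((((j:ℕ) + (ℓ:ℕ)) % n) + n - (j:ℕ)) % n, Nat.mod_lt _ hn0⟩ : Fin n) = ℓ :=
            Fin.ext (hreal j ℓ)
          rwa [he] at h0
      have hri : ∀ ℓ, d i ℓ = 0 := by
        intro ℓ
        by_cases hl1 : ℓ = j
        · rw [hl1, hsym]; exact hrj i
        · by_cases hl2 : ℓ = n2
          · rw [hl2]; exact hFn2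
          · have hlow : (ℓ:ℕ) < n - 2 := by
              have h2 : (ℓ:ℕ) ≠ n - 2 := fun h => hl2 (Fin.ext h)
              have h3 : (ℓ:ℕ) ≠ n - 1 := fun h => hl1 (Fin.ext (by rw [h, hjv]))
              have := ℓ.isLt
              omega
            exact hFlow ℓ hlow
      exact assemble hri hrj
    · -- CASE D : i = n-2, j = n-1
      have hiv2' : (i:ℕ) = n - 2 := by have := i.isLt; omega
      have hin2 : i = n2 := Fin.ext hiv2'
      have key : ∀ m : ℕ, m < n →
          (if (m + n - (j:ℕ)) % n = n - 2 then 0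
            else d j ⟨(m + n - (j:ℕ)) % n, Nat.mod_lt _ hn0⟩) + d n1 n2 = 0 := by
        intro m hm
        have h0 := hDm' m hm
        rw [if_pos (show (i:ℕ) = n - 2 ∨ (m + n - (i:ℕ)) % n = n - 2 from Or.inl hiv2'),
          if_neg (show ¬(((i:ℕ) + (j:ℕ)) % n = m ∧ (i:ℕ) ≠ n - 2 ∧ (j:ℕ) ≠ n - 2) from
            fun hc => hc.2.1 hiv2'),
          zero_add, add_zero] at h0
        by_cases hc : (m + n - (j:ℕ)) % n = n - 2
        · rw [if_pos hc]
          rw [if_pos (show (j:ℕ) = n - 2 ∨ (m + n - (j:ℕ)) % n = n - 2 from Or.inr hc)] at h0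
          exact h0
        · rw [if_neg hc]
          rw [if_neg (show ¬((j:ℕ) = n - 2 ∨ (m + n - (j:ℕ)) % n = n - 2) by
            push_neg; exact ⟨by omega, hc⟩)] at h0
          exact h0
      have hX : d n1 n2 = 0 := by
        have h0 := key (((j:ℕ) + (n2:ℕ)) % n) (Nat.mod_lt _ hn0)
        rw [if_pos (hreal j n2), zero_add] at h0
        exact h0
      have hrj : ∀ ℓ, d j ℓ = 0 := by
        intro ℓ
        by_cases hℓ : ℓ = n2
        · rw [hℓ, hjn1]; exact hX
        · have hlv : (ℓ:ℕ) ≠ n - 2 := fun h => hℓ (Fin.ext h)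
          have h0 := key (((j:ℕ) + (ℓ:ℕ)) % n) (Nat.mod_lt _ hn0)
          rw [if_neg (by rw [hreal j ℓ]; exact hlv), hX, add_zero] at h0
          have he : (⟨((((j:ℕ) + (ℓ:ℕ)) % n) + n - (j:ℕ)) % n, Nat.mod_lt _ hn0⟩ : Fin n) = ℓ :=
            Fin.ext (hreal j ℓ)
          rwa [he] at h0
      have hri : ∀ ℓ, d i ℓ = 0 := by
        intro ℓ
        by_cases hl1 : ℓ = j
        · rw [hl1, hsym]; exact hrj i
        · by_cases hl2 : ℓ = i
          · rw [hl2]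
            have h0 := hdiag'
            rw [if_pos (show (i:ℕ) < n - 1 by omega),
              if_neg (show ¬((j:ℕ) < n - 1) by omega), add_zero] at h0
            exact h0
          · have hlv : (ℓ:ℕ) < n - 2 := by
              have h2 : (ℓ:ℕ) ≠ n - 2 := fun h => hl2 (Fin.ext (by rw [h, hiv2']))
              have h3 : (ℓ:ℕ) ≠ n - 1 := fun h => hl1 (Fin.ext (by rw [h, hjv]))
              have := ℓ.isLt
              omega
            have h0 := hrow' ℓ hlv hl2 hl1
            rw [if_pos (show (i:ℕ) < n - 1 by omega),
              if_neg (show ¬((j:ℕ) < n - 1) by omega), add_zero] at h0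
            rw [hsym]
            exact h0
      exact assemble hri hrj
end


/-- the kernel lemma without the ordering assumption -/
lemma kernelMain {n : ℕ} (hn : 5 ≤ n) (hp : Nat.Prime n) (i j : Fin n) (hij : i ≠ j)
    (d : Fin n → Fin n → ZMod 2) (hd : d ∈ CU1 n hn)
    (hsupp : ∀ k ℓ : Fin n, k ≠ i → k ≠ j → ℓ ≠ i → ℓ ≠ j → d k ℓ = 0) :
    d = 0 := by
  obtain ⟨hsym, hrow, hdiag, hDm⟩ := hd
  rcases Nat.lt_or_ge (i:ℕ) (j:ℕ) with h | h
  · exact kernelAux hn hp i j h d hsym hrow hdiag hDm hsupp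
  · have h' : (j:ℕ) < (i:ℕ) := by
      have hne : (i:ℕ) ≠ (j:ℕ) := fun e => hij (Fin.ext e)
      omega
    exact kernelAux hn hp j i h' d hsym hrow hdiag hDm
      (fun k ℓ a b c e => hsupp k ℓ b a e c)

/-- Correctness of Construction 3: for prime `n ≥ 5` the code `C_{U_1}` is an undirected
double-node-erasure-correcting code: any two labelings of `C_{U_1}` agreeing on every
unordered pair avoiding two failed nodes `i, j` are equal. -/
theorem CU1_double_node_erasure_correcting (n : ℕ) (hn : 5 ≤ n) (hp : Nat.Prime n)
    (i j : Fin n) (hij : i ≠ j)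
    (L1 L2 : Fin n → Fin n → ZMod 2) (h1 : L1 ∈ CU1 n hn) (h2 : L2 ∈ CU1 n hn)
    (hagree : ∀ k ℓ : Fin n, k ≠ i → k ≠ j → ℓ ≠ i → ℓ ≠ j → L1 k ℓ = L2 k ℓ) :
    L1 = L2 := by
  obtain ⟨h1sym, h1row, h1diag, h1D⟩ := h1
  obtain ⟨h2sym, h2row, h2diag, h2D⟩ := h2
  set d : Fin n → Fin n → ZMod 2 := fun k ℓ => L1 k ℓ - L2 k ℓ with hd
  have hdmem : d ∈ CU1 n hn := by
    refine ⟨fun k ℓ => by simp only [hd]; rw [h1sym k ℓ, h2sym k ℓ], ?_, ?_, ?_⟩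
    · intro h hh
      simp only [hd]
      rw [Finset.sum_sub_distrib, h1row h hh, h2row h hh, sub_zero]
    · simp only [hd]
      rw [Finset.sum_sub_distrib, h1diag, h2diag, sub_zero]
    · intro m hm
      simp only [hd]
      rw [Finset.sum_sub_distrib]
      linear_combination h1D m hm - h2D m hm
  have hdsupp : ∀ k ℓ : Fin n, k ≠ i → k ≠ j → ℓ ≠ i → ℓ ≠ j → d k ℓ = 0 := by
    intro k ℓ a b c e
    simp only [hd]
    rw [hagree k ℓ a b c e, sub_self]
  have hd0 : d = 0 := kernelMain hn hp i j hij d hdmem hdsupp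
  funext k ℓ
  have hkl := congrFun (congrFun hd0 k) ℓ
  simp only [hd, Pi.zero_apply] at hkl
  exact sub_eq_zero.mp hkl
end

section
/- (Claim 7) Let n ≥ 5 be prime and let i, j ∈ [n−2] with i < j. Set d = ⟨j−i⟩_n, let d^{-1} denote the multiplicative inverse of d modulo n, and set x = ⟨−1−d^{-1}⟩_n, y = ⟨−1+d^{-1}⟩_n, x' = ⟨−1+d^{-1}⟩_n, y' = ⟨−1−d^{-1}⟩_n. Define A = {⟨−d(t+1)−2⟩_n : 0 ≤ t ≤ x}, B = {⟨d(t+1)−2⟩_n : 0 ≤ t ≤ y}, A' = {⟨−d(t+1)−1⟩_n : 0 ≤ t ≤ x'}, B' = {⟨d(t+1)−1⟩_n : 0 ≤ t ≤ y'}. Then exactly one of the following holds: both i and j belong to A ∩ B', or both i and j belong to A' ∩ B (but not both alternatives simultaneously). -/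
namespace Claim7Aux

variable {n : ℕ} [NeZero n]

lemma eq_cast_val (a : ZMod n) : a = ((a.val : ℕ) : ZMod n) :=
  (ZMod.natCast_rightInverse a).symm

lemma ne_val {a : ZMod n} {k : ℕ} (h : a ≠ (k : ZMod n)) : a.val ≠ k :=
  fun hv => h (by rw [← hv]; exact eq_cast_val a)

lemma cast_neg_one : ((n - 1 : ℕ) : ZMod n) = -1 := by
  rw [Nat.cast_sub (NeZero.one_le), Nat.cast_one, ZMod.natCast_self, zero_sub]

lemma val_sub_one {a : ZMod n} (ha : a ≠ 0) : (a - 1).val = a.val - 1 := by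
  have h1 : 0 < a.val := ZMod.val_pos.mpr ha
  have h2 : a.val < n := ZMod.val_lt a
  have h3 : a - 1 = ((a.val - 1 : ℕ) : ZMod n) := by
    rw [Nat.cast_sub h1, Nat.cast_one, ← eq_cast_val]
  rw [h3, ZMod.val_cast_of_lt (by omega)]

omit [NeZero n] in
lemma val_neg_two (hn : 2 ≤ n) : ((-2 : ZMod n)).val = n - 2 := by
  have h : ((n - 2 : ℕ) : ZMod n) = -2 := by
    rw [Nat.cast_sub (by omega), ZMod.natCast_self, zero_sub]
    norm_num
  rw [← h, ZMod.val_cast_of_lt (by omega)]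

lemma equiv_pair {p q r : ZMod n} {m : ℕ} (hpq : p + q = r) (hr : r.val = m - 1)
    (hm : 1 ≤ m) (hp : p ≠ -1) (hq : q ≠ -1) : p.val ≤ m ↔ q.val ≤ m := by
  have hadd : (p.val + q.val) % n = m - 1 := by rw [← ZMod.val_add, hpq, hr]
  have hpn : p.val < n := ZMod.val_lt p
  have hqn : q.val < n := ZMod.val_lt q
  have hp' : p.val ≠ n - 1 := ne_val (by rw [cast_neg_one]; exact hp)
  have hq' : q.val ≠ n - 1 := ne_val (by rw [cast_neg_one]; exact hq)
  have hmn : m - 1 < n := hr ▸ ZMod.val_lt r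
  have hcases : p.val + q.val = m - 1 ∨ p.val + q.val = n + (m - 1) := by
    rcases Nat.lt_or_ge (p.val + q.val) n with h | h
    · left; rwa [Nat.mod_eq_of_lt h] at hadd
    · right
      rw [Nat.mod_eq_sub_mod h, Nat.mod_eq_of_lt (by omega)] at hadd
      omega
  omega

lemma xor_pair {p q : ZMod n} {x : ℕ} (hn2 : 2 ≤ n) (hpq : p + q = -2) (hp1 : p ≠ -1)
    (hx : x ≤ n - 2) (hpx : p ≠ (x : ZMod n)) : p.val ≤ x ↔ ¬ q.val ≤ n - 2 - x := by
  have hadd : (p.val + q.val) % n = n - 2 := by rw [← ZMod.val_add, hpq, val_neg_two hn2]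
  have hpn : p.val < n := ZMod.val_lt p
  have hqn : q.val < n := ZMod.val_lt q
  have hp' : p.val ≠ n - 1 := ne_val (by rw [cast_neg_one]; exact hp1)
  have hpx' : p.val ≠ x := ne_val hpx
  have hcases : p.val + q.val = n - 2 ∨ p.val + q.val = n + (n - 2) := by
    rcases Nat.lt_or_ge (p.val + q.val) n with h | h
    · left; rwa [Nat.mod_eq_of_lt h] at hadd
    · right
      rw [Nat.mod_eq_sub_mod h, Nat.mod_eq_of_lt (by omega)] at hadd
      omega
  omega

lemma mem_iff {e c f : ZMod n} (hce : c * e = 1) {m : ℕ} (hm : m < n) (s : ZMod n) :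
    (∃ t : ℕ, t ≤ m ∧ s = e * (t + 1) + f) ↔ (c * (s - f) - 1).val ≤ m := by
  constructor
  · rintro ⟨t, ht, rfl⟩
    have h : c * (e * (t + 1) + f - f) - 1 = (t : ZMod n) := by
      linear_combination ((t : ZMod n) + 1) * hce
    rw [h, ZMod.val_cast_of_lt (by omega)]
    exact ht
  · intro h
    refine ⟨(c * (s - f) - 1).val, h, ?_⟩
    rw [← eq_cast_val]
    linear_combination (f - s) * hce

end Claim7Aux
open Claim7Aux in
/-- Claim 7: let `n ≥ 5` be prime, `i < j` in `[n-2]`, `d = ⟨j-i⟩_n`, and working in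
`ZMod n` set `x = ⟨-1 - d⁻¹⟩_n`, `y = ⟨-1 + d⁻¹⟩_n`, `x' = ⟨-1 + d⁻¹⟩_n = y`,
`y' = ⟨-1 - d⁻¹⟩_n = x`.  With
`A = {⟨-d(t+1)-2⟩_n : 0 ≤ t ≤ x}`, `B = {⟨d(t+1)-2⟩_n : 0 ≤ t ≤ y}`,
`A' = {⟨-d(t+1)-1⟩_n : 0 ≤ t ≤ x'}`, `B' = {⟨d(t+1)-1⟩_n : 0 ≤ t ≤ y'}`,
exactly one of the following holds: `i, j ∈ A ∩ B'`, or `i, j ∈ A' ∩ B`. -/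
theorem claim7_xor (n : ℕ) (hn : 5 ≤ n) (hp : Nat.Prime n)
    (i j : ℕ) (hij : i < j) (hj : j < n - 2) :
    let d : ZMod n := (j : ZMod n) - (i : ZMod n)
    let x : ℕ := (-1 - d⁻¹ : ZMod n).val
    let y : ℕ := (-1 + d⁻¹ : ZMod n).val
    let A : Set (ZMod n) := {s | ∃ t : ℕ, t ≤ x ∧ s = -(d * (t + 1)) - 2}
    let B : Set (ZMod n) := {s | ∃ t : ℕ, t ≤ y ∧ s = d * (t + 1) - 2}
    let A' : Set (ZMod n) := {s | ∃ t : ℕ, t ≤ y ∧ s = -(d * (t + 1)) - 1}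
    let B' : Set (ZMod n) := {s | ∃ t : ℕ, t ≤ x ∧ s = d * (t + 1) - 1}
    Xor' ((i : ZMod n) ∈ A ∩ B' ∧ (j : ZMod n) ∈ A ∩ B')
         ((i : ZMod n) ∈ A' ∩ B ∧ (j : ZMod n) ∈ A' ∩ B) := by
  intro d x y A B A' B'
  haveI : NeZero n := ⟨by omega⟩
  haveI : Fact (Nat.Prime n) := ⟨hp⟩
  set c : ZMod n := d⁻¹ with hc
  have hxdef : x = (-1 - c : ZMod n).val := rfl
  have hydef : y = (-1 + c : ZMod n).val := rfl
  -- cast nonvanishing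
  have hcast : ∀ k : ℕ, 0 < k → k < n → (k : ZMod n) ≠ 0 := by
    intro k h1 h2 h
    rw [ZMod.natCast_eq_zero_iff] at h
    have := Nat.le_of_dvd h1 h
    omega
  have hd0 : d ≠ 0 := by
    have hdd : d = ((j - i : ℕ) : ZMod n) := by
      rw [Nat.cast_sub hij.le]
    rw [hdd]
    exact hcast _ (by omega) (by omega)
  have hcd : c * d = 1 := inv_mul_cancel₀ hd0
  have hc0 : c ≠ 0 := by
    intro h; rw [h, zero_mul] at hcd; exact zero_ne_one hcd
  have hi1 : (i : ZMod n) + 1 ≠ 0 := by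
    have h : (i : ZMod n) + 1 = ((i + 1 : ℕ) : ZMod n) := by push_cast; ring
    rw [h]; exact hcast _ (by omega) (by omega)
  have hi2 : (i : ZMod n) + 2 ≠ 0 := by
    have h : (i : ZMod n) + 2 = ((i + 2 : ℕ) : ZMod n) := by push_cast; ring
    rw [h]; exact hcast _ (by omega) (by omega)
  have hj1 : (j : ZMod n) + 1 ≠ 0 := by
    have h : (j : ZMod n) + 1 = ((j + 1 : ℕ) : ZMod n) := by push_cast; ring
    rw [h]; exact hcast _ (by omega) (by omega)
  have hj2 : (j : ZMod n) + 2 ≠ 0 := by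
    have h : (j : ZMod n) + 2 = ((j + 2 : ℕ) : ZMod n) := by push_cast; ring
    rw [h]; exact hcast _ (by omega) (by omega)
  have hji : (j : ZMod n) = (i : ZMod n) + d := by rw [hc] at *; show _ = _ + ((j:ZMod n) - i); ring
  have hdm1 : d ≠ -1 := by
    intro h
    apply hcast (j + 1 - i) (by omega) (by omega)
    rw [Nat.cast_sub (by omega)]
    push_cast
    have : d = (j : ZMod n) - i := rfl
    linear_combination h - this
  have hcm1 : c ≠ -1 := by
    intro h
    apply hdm1
    rw [h] at hcd
    linear_combination -hcd
  -- x, y facts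
  have hx1 : 1 ≤ x := by
    refine ZMod.val_pos.mpr ?_
    intro h; exact hcm1 (by linear_combination -h)
  have hxlt : x < n := ZMod.val_lt _
  have hylt : y < n := ZMod.val_lt _
  have hxn1 : x ≠ n - 1 := by
    apply ne_val
    rw [cast_neg_one]
    intro h; exact hc0 (by linear_combination -h)
  have hxy : x + y = n - 2 := by
    have hadd : ((-1 - c) + (-1 + c) : ZMod n) = -2 := by ring
    have hv : (x + y) % n = n - 2 := by
      rw [hxdef, hydef, ← ZMod.val_add, hadd, val_neg_two (by omega)]
    rcases Nat.lt_or_ge (x + y) n with h | h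
    · rwa [Nat.mod_eq_of_lt h] at hv
    · rw [Nat.mod_eq_sub_mod h, Nat.mod_eq_of_lt (by omega)] at hv
      omega
  have hcastx : ((x : ℕ) : ZMod n) = -1 - c := by rw [hxdef, ← eq_cast_val]
  have hcasty : ((y : ℕ) : ZMod n) = -1 + c := by rw [hydef, ← eq_cast_val]
  -- membership characterizations
  have hmA : ∀ s : ZMod n, s ∈ A ↔ ((-c) * (s + 2) - 1).val ≤ x := by
    intro s
    have h1 := mem_iff (e := -d) (c := -c) (f := -2) (n := n)
      (by linear_combination hcd) (m := x) hxlt s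
    simp only [sub_neg_eq_add] at h1
    rw [← h1]
    exact exists_congr fun t => and_congr_right fun _ => by constructor <;>
      (intro h; rw [h]; ring)
  have hmB : ∀ s : ZMod n, s ∈ B ↔ (c * (s + 2) - 1).val ≤ y := by
    intro s
    have h1 := mem_iff (e := d) (c := c) (f := -2) (n := n) hcd (m := y) hylt s
    simp only [sub_neg_eq_add] at h1
    rw [← h1]
    exact exists_congr fun t => and_congr_right fun _ => by constructor <;>
      (intro h; rw [h]; ring)
  have hmA' : ∀ s : ZMod n, s ∈ A' ↔ ((-c) * (s + 1) - 1).val ≤ y := by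
    intro s
    have h1 := mem_iff (e := -d) (c := -c) (f := -1) (n := n)
      (by linear_combination hcd) (m := y) hylt s
    simp only [sub_neg_eq_add] at h1
    rw [← h1]
    exact exists_congr fun t => and_congr_right fun _ => by constructor <;>
      (intro h; rw [h]; ring)
  have hmB' : ∀ s : ZMod n, s ∈ B' ↔ (c * (s + 1) - 1).val ≤ x := by
    intro s
    have h1 := mem_iff (e := d) (c := c) (f := -1) (n := n) hcd (m := x) hxlt s
    simp only [sub_neg_eq_add] at h1
    rw [← h1]
    exact exists_congr fun t => and_congr_right fun _ => by constructor <;>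
      (intro h; rw [h]; ring)
  -- core equivalences, for s with s+1 ≠ 0 and s+2 ≠ 0
  have E1 : ∀ s : ZMod n, s + 1 ≠ 0 → s + 2 ≠ 0 →
      (((-c) * (s + 2) - 1).val ≤ x ↔ (c * (s + 1) - 1).val ≤ x) := by
    intro s hs1 hs2
    refine equiv_pair (r := (-1 - c) - 1) (by ring) ?_ hx1 ?_ ?_
    · rw [val_sub_one (show (-1 - c : ZMod n) ≠ 0 from
        fun h => hcm1 (by linear_combination -h)), ← hxdef]
    · intro h
      have h2 : c * (s + 2) = 0 := by linear_combination -h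
      rcases mul_eq_zero.mp h2 with h3 | h3
      exacts [hc0 h3, hs2 h3]
    · intro h
      have h2 : c * (s + 1) = 0 := by linear_combination h
      rcases mul_eq_zero.mp h2 with h3 | h3
      exacts [hc0 h3, hs1 h3]
  have E2 : ∀ s : ZMod n, s + 1 ≠ 0 → s + 2 ≠ 0 →
      (((-c) * (s + 2) - 1).val ≤ x ↔ ¬ (c * (s + 2) - 1).val ≤ y) := by
    intro s hs1 hs2
    have h := xor_pair (p := (-c) * (s + 2) - 1) (q := c * (s + 2) - 1) (x := x) (n := n)
      (by omega) (by ring) ?_ (by omega) ?_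
    · rwa [show n - 2 - x = y by omega] at h
    · intro h
      have h2 : c * (s + 2) = 0 := by linear_combination -h
      rcases mul_eq_zero.mp h2 with h3 | h3
      exacts [hc0 h3, hs2 h3]
    · rw [hcastx]
      intro h
      have h2 : c * (s + 1) = 0 := by linear_combination -h
      rcases mul_eq_zero.mp h2 with h3 | h3
      exacts [hc0 h3, hs1 h3]
  have E3 : ∀ s : ZMod n, s + 1 ≠ 0 → s + 2 ≠ 0 →
      (((-c) * (s + 1) - 1).val ≤ y ↔ ¬ (c * (s + 1) - 1).val ≤ x) := by
    intro s hs1 hs2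
    have h := xor_pair (p := (-c) * (s + 1) - 1) (q := c * (s + 1) - 1) (x := y) (n := n)
      (by omega) (by ring) ?_ (by omega) ?_
    · rwa [show n - 2 - y = x by omega] at h
    · intro h
      have h2 : c * (s + 1) = 0 := by linear_combination -h
      rcases mul_eq_zero.mp h2 with h3 | h3
      exacts [hc0 h3, hs1 h3]
    · rw [hcasty]
      intro h
      have h2 : c * (s + 2) = 0 := by linear_combination -h
      rcases mul_eq_zero.mp h2 with h3 | h3
      exacts [hc0 h3, hs2 h3]
  -- link between i and j for condition A
  have hpij : (-c) * ((j : ZMod n) + 2) - 1 = ((-c) * ((i : ZMod n) + 2) - 1) - 1 := by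
    rw [hji]; linear_combination -hcd
  have hp0 : (-c) * ((i : ZMod n) + 2) - 1 ≠ 0 := by
    intro h
    apply hj2
    rw [hji]
    linear_combination (-d) * h - ((i : ZMod n) + 2) * hcd
  have hpnex : (-c) * ((i : ZMod n) + 2) - 1 ≠ ((x + 1 : ℕ) : ZMod n) := by
    have hcx : ((x + 1 : ℕ) : ZMod n) = -c := by push_cast [hcastx]; ring
    rw [hcx]
    intro h
    apply hj1
    rw [hji]
    linear_combination (-d) * h - ((i : ZMod n) + 1) * hcd
  have hlink : ((-c) * ((j : ZMod n) + 2) - 1).val ≤ x ↔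
      ((-c) * ((i : ZMod n) + 2) - 1).val ≤ x := by
    rw [hpij, val_sub_one hp0]
    have h1 : 1 ≤ ((-c) * ((i : ZMod n) + 2) - 1).val := ZMod.val_pos.mpr hp0
    have h2 : ((-c) * ((i : ZMod n) + 2) - 1).val ≠ x + 1 := ne_val hpnex
    omega
  -- assemble
  by_cases hA : ((-c) * ((i : ZMod n) + 2) - 1).val ≤ x
  · have hjA : ((-c) * ((j : ZMod n) + 2) - 1).val ≤ x := hlink.mpr hA
    refine Or.inl ⟨⟨⟨(hmA _).mpr hA, (hmB' _).mpr ((E1 _ hi1 hi2).mp hA)⟩,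
      ⟨(hmA _).mpr hjA, (hmB' _).mpr ((E1 _ hj1 hj2).mp hjA)⟩⟩, ?_⟩
    rintro ⟨⟨-, hiB⟩, -⟩
    exact (E2 _ hi1 hi2).mp hA ((hmB _).mp hiB)
  · have hjA : ¬ ((-c) * ((j : ZMod n) + 2) - 1).val ≤ x := fun h => hA (hlink.mp h)
    have hiB' : ¬ (c * ((i : ZMod n) + 1) - 1).val ≤ x := fun h => hA ((E1 _ hi1 hi2).mpr h)
    have hjB' : ¬ (c * ((j : ZMod n) + 1) - 1).val ≤ x := fun h => hjA ((E1 _ hj1 hj2).mpr h)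
    have hiB : (c * ((i : ZMod n) + 2) - 1).val ≤ y := by
      by_contra h; exact hA ((E2 _ hi1 hi2).mpr h)
    have hjB : (c * ((j : ZMod n) + 2) - 1).val ≤ y := by
      by_contra h; exact hjA ((E2 _ hj1 hj2).mpr h)
    refine Or.inr ⟨⟨⟨(hmA' _).mpr ((E3 _ hi1 hi2).mpr hiB'), (hmB _).mpr hiB⟩,
      ⟨(hmA' _).mpr ((E3 _ hj1 hj2).mpr hjB'), (hmB _).mpr hjB⟩⟩, ?_⟩
    rintro ⟨⟨hiA, -⟩, -⟩
    exact hA ((hmA _).mp hiA)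
end
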